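/- arXiv:2011.04115 — 8 statements merged into one kernel-verified Lean document; each statement's English description precedes it below -/
import Mathlib

section
/- Let p be a prime, r > 1, q = p^r, 0 ≤ m ≤ q−1, and m' ≡ m (mod q−1). Write m = ∑_{i=0}^{r−1} m_i p^i and m' = ∑_j m'_j p^j in base p, and set r'_i = ∑_{j ≡ i (mod r)} m'_j. Then the digit sums satisfy f(m') = f(m) if and only if r'_i = m_i for all 0 ≤ i ≤ r−1. -/
/-!
The block sums `r'_i` add up to `f(m')` and, since `p ^ r ≡ 1 [MOD p ^ r - 1]`, satisfy
`∑ r'_i p ^ i ≡ m'`. Among all vectors `(a_i)_{i<r}` of naturals with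
`∑ a_i p ^ i ≡ m [MOD p ^ r - 1]`, the digit vector of `m` is the unique one of least coordinate sum: an entry `a_i ≥ p` can be carried cyclically to position `i + 1 mod r`,
lowering the sum by `p - 1` without changing the class, and a vector with all entries `< p` is
the digit vector of a number `< p ^ r` congruent to `m`, hence of `m` itself (the ambiguity
between `0` and `p ^ r - 1` is settled by the digit sum).
-/

open Finset

namespace Nat

theorem sum_range_getD_eq_sum {L : List ℕ} {n : ℕ} (h : L.length ≤ n) :
    ∑ j ∈ range n, L.getD j 0 = L.sum := by
  induction L generalizing n with
  | nil => simp
  | cons d L ih =>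
    obtain ⟨n, rfl⟩ : ∃ k, n = k + 1 := exists_eq_succ_of_ne_zero (by simp at h; omega)
    rw [sum_range_succ', List.sum_cons, add_comm]
    simpa using ih (by simpa using h)

theorem ofDigits_eq_sum_range_getD {R : Type*} [CommSemiring R] (b : R) (L : List ℕ) :
    ofDigits b L = ∑ j ∈ range L.length, (L.getD j 0 : R) * b ^ j := by
  induction L with
  | nil => simp [ofDigits]
  | cons d L ih =>
    rw [ofDigits, ih, List.length_cons, sum_range_succ', mul_sum]
    simp only [List.getD_cons_succ, List.getD_cons_zero, pow_zero, mul_one, pow_succ]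
    rw [add_comm]
    congr 1
    exact sum_congr rfl fun j _ => by ring

theorem sum_digits_eq_zero_iff {b n : ℕ} : (digits b n).sum = 0 ↔ n = 0 := by
  refine ⟨fun h => ?_, fun h => by simp [h]⟩
  by_contra hn
  have hne := digits_ne_nil_iff_ne_zero (b := b).mpr hn
  have := List.le_sum_of_mem (List.getLast_mem hne)
  have := getLast_digit_ne_zero b hn
  omega

theorem sum_digits_eq_sum_range_getD {b n r : ℕ} (hb : 1 < b) (hn : n < b ^ r) :
    (digits b n).sum = ∑ i ∈ range r, (digits b n).getD i 0 :=
  (sum_range_getD_eq_sum ((digits_length_le_iff hb n).mpr hn)).symm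

theorem pow_modEq_pow_mod {b : ℕ} (hb : 0 < b) (r j : ℕ) :
    b ^ j ≡ b ^ (j % r) [MOD b ^ r - 1] := by
  have h1 : b ^ r ≡ 1 [MOD b ^ r - 1] :=
    ((modEq_iff_dvd' (one_le_pow r b hb)).mpr dvd_rfl).symm
  calc b ^ j = (b ^ r) ^ (j / r) * b ^ (j % r) := by rw [← pow_mul, ← pow_add, div_add_mod]
    _ ≡ 1 ^ (j / r) * b ^ (j % r) [MOD b ^ r - 1] := (h1.pow _).mul_right _
    _ = b ^ (j % r) := by rw [one_pow, one_mul]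

theorem ModEq.eq_of_le_of_eq_zero_iff {n x y : ℕ} (h : x ≡ y [MOD n]) (hx : x ≤ n) (hy : y ≤ n)
    (h0 : x = 0 ↔ y = 0) : x = y := by
  rcases eq_or_ne x 0 with hx0 | hx0
  · rw [hx0, h0.mp hx0]
  have h' : (x - 1) % n = (y - 1) % n :=
    ModEq.add_right_cancel' 1 <| by
      rwa [Nat.sub_add_cancel (by omega), Nat.sub_add_cancel (by omega)]
  rw [mod_eq_of_lt (by omega), mod_eq_of_lt (by omega)] at h'
  omega

theorem sum_range_succ_mul_pow (a : ℕ → ℕ) (b r : ℕ) :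
    ∑ i ∈ range (r + 1), a i * b ^ i = a 0 + b * ∑ i ∈ range r, a (i + 1) * b ^ i := by
  rw [sum_range_succ', mul_sum, add_comm]
  simp only [pow_zero, mul_one, pow_succ]
  congr 1
  exact sum_congr rfl fun i _ => by ring

section DigitVectors

variable {b r m : ℕ} {a : ℕ → ℕ}

theorem sum_range_mul_pow_lt (ha : ∀ i < r, a i < b) : ∑ i ∈ range r, a i * b ^ i < b ^ r := by
  induction r generalizing a with
  | zero => simp
  | succ r ih =>
    have hlow := ha 0 (by omega)
    have hhigh := ih (a := fun i => a (i + 1)) fun i hi => ha (i + 1) (by omega)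
    rw [sum_range_succ_mul_pow, pow_succ']
    nlinarith

theorem getD_digits_sum_range_mul_pow (hb : 2 ≤ b) (ha : ∀ i < r, a i < b) {i : ℕ} (hi : i < r) :
    (digits b (∑ j ∈ range r, a j * b ^ j)).getD i 0 = a i := by
  induction r generalizing a i with
  | zero => omega
  | succ r ih =>
    have hlow := ha 0 (by omega)
    rw [sum_range_succ_mul_pow, getD_digits _ _ hb]
    rcases i with _ | i
    · simp [mod_eq_of_lt hlow]
    · rw [pow_succ', ← Nat.div_div_eq_div_mul, add_mul_div_left _ _ (by omega),
        div_eq_of_lt hlow, zero_add, ← getD_digits _ _ hb]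
      exact ih (fun j hj => ha (j + 1) (by omega)) (by omega)

theorem sum_digits_sum_range_mul_pow (hb : 2 ≤ b) (ha : ∀ i < r, a i < b) :
    (digits b (∑ i ∈ range r, a i * b ^ i)).sum = ∑ i ∈ range r, a i := by
  rw [sum_digits_eq_sum_range_getD hb (sum_range_mul_pow_lt ha)]
  exact sum_congr rfl fun i hi => getD_digits_sum_range_mul_pow hb ha (mem_range.mp hi)

theorem sum_range_mul_pow_eq_of_modEq (hb : 2 ≤ b) (ha : ∀ i < r, a i < b) (hm : m < b ^ r)
    (hmod : ∑ i ∈ range r, a i * b ^ i ≡ m [MOD b ^ r - 1])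
    (h0 : ∑ i ∈ range r, a i = 0 ↔ m = 0) :
    ∑ i ∈ range r, a i * b ^ i = m := by
  have hlt := sum_range_mul_pow_lt ha
  refine hmod.eq_of_le_of_eq_zero_iff (by omega) (by omega) ?_
  rw [← sum_digits_eq_zero_iff (b := b), sum_digits_sum_range_mul_pow hb ha, h0]

/-- Carrying `b` units at position `i` to one unit at position `(i + 1) % r` keeps the value
modulo `b ^ r - 1`, because `b ^ r ≡ 1`. -/
theorem exists_carry (hb : 0 < b) {i : ℕ} (hi : i < r) (hai : b ≤ a i) :
    ∃ a' : ℕ → ℕ, ∑ j ∈ range r, a' j + b = ∑ j ∈ range r, a j + 1 ∧ 0 < ∑ j ∈ range r, a' j ∧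
      ∑ j ∈ range r, a' j * b ^ j ≡ ∑ j ∈ range r, a j * b ^ j [MOD b ^ r - 1] := by
  set i' := (i + 1) % r
  have hi' : i' < r := mod_lt _ (by omega)
  set a' : ℕ → ℕ := fun j => a j + (if j = i' then 1 else 0) - (if j = i then b else 0)
  have hcoef : ∀ j, a' j + (if i = j then b else 0) = a j + (if i' = j then 1 else 0) := by
    intro j
    simp only [a', eq_comm (a := j)]
    split_ifs <;> subst_vars <;> omega
  have key : ∀ c : ℕ → ℕ,
      ∑ j ∈ range r, a' j * c j + b * c i = ∑ j ∈ range r, a j * c j + c i' := by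
    intro c
    calc ∑ j ∈ range r, a' j * c j + b * c i
        = ∑ j ∈ range r, (a' j + if i = j then b else 0) * c j := by
          simp [add_mul, sum_add_distrib, ite_mul, hi]
      _ = ∑ j ∈ range r, (a j + if i' = j then 1 else 0) * c j := by simp only [hcoef]
      _ = ∑ j ∈ range r, a j * c j + c i' := by
          simp [add_mul, sum_add_distrib, ite_mul, hi']
  have hsum := key 1
  simp only [Pi.one_apply, mul_one] at hsum
  have hle : a i ≤ ∑ j ∈ range r, a j := single_le_sum (fun _ _ => zero_le _) (mem_range.mpr hi)
  refine ⟨a', hsum, by omega, ?_⟩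
  refine ModEq.add_right_cancel (pow_modEq_pow_mod hb r (i + 1)) ?_
  rw [pow_succ', key]

theorem sum_digits_le_of_modEq (hb : 2 ≤ b) (hm : m < b ^ r)
    (hmod : ∑ i ∈ range r, a i * b ^ i ≡ m [MOD b ^ r - 1])
    (hpos : m ≠ 0 → ∑ i ∈ range r, a i ≠ 0) :
    (digits b m).sum ≤ ∑ i ∈ range r, a i := by
  induction hS : ∑ i ∈ range r, a i using Nat.strong_induction_on generalizing a with
  | _ S ih =>
  by_cases hsmall : ∀ i < r, a i < b
  · rcases eq_or_ne m 0 with rfl | hm0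
    · simp
    have hN := sum_range_mul_pow_eq_of_modEq hb hsmall hm hmod (iff_of_false (hpos hm0) hm0)
    rw [← hN, sum_digits_sum_range_mul_pow hb hsmall, hS]
  · push Not at hsmall
    obtain ⟨i, hi, hai⟩ := hsmall
    obtain ⟨a', hsum', hpos', hmod'⟩ := exists_carry (by omega) hi hai
    exact (ih _ (by omega) (hmod'.trans hmod) (fun _ => by omega) rfl).trans (by omega)

theorem eq_getD_digits_of_modEq_of_sum_eq (hb : 2 ≤ b) (hm : m < b ^ r)
    (hmod : ∑ i ∈ range r, a i * b ^ i ≡ m [MOD b ^ r - 1])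
    (hsum : ∑ i ∈ range r, a i = (digits b m).sum) :
    ∀ i < r, a i = (digits b m).getD i 0 := by
  have hsmall : ∀ i < r, a i < b := by
    by_contra! ⟨i, hi, hai⟩
    obtain ⟨a', hsum', hpos', hmod'⟩ := exists_carry (by omega) hi hai
    have := sum_digits_le_of_modEq hb hm (hmod'.trans hmod) fun _ => by omega
    omega
  have hN := sum_range_mul_pow_eq_of_modEq hb hsmall hm hmod
    (by rw [hsum, sum_digits_eq_zero_iff])
  intro i hi
  rw [← hN, getD_digits_sum_range_mul_pow hb hsmall hi]

end DigitVectors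

end Nat

def blockSum (L : List ℕ) (r i : ℕ) : ℕ :=
  ∑ j ∈ range L.length, if j % r = i then L.getD j 0 else 0

theorem sum_blockSum_mul {r : ℕ} (hr : 0 < r) (L : List ℕ) (c : ℕ → ℕ) :
    ∑ i ∈ range r, blockSum L r i * c i = ∑ j ∈ range L.length, L.getD j 0 * c (j % r) := by
  simp only [blockSum, sum_mul, ite_mul, zero_mul]
  rw [sum_comm]
  exact sum_congr rfl fun j _ => by simp [Nat.mod_lt j hr]

theorem sum_blockSum {r : ℕ} (hr : 0 < r) (L : List ℕ) :
    ∑ i ∈ range r, blockSum L r i = L.sum := by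
  simpa only [Pi.one_apply, mul_one, Nat.sum_range_getD_eq_sum le_rfl] using
    sum_blockSum_mul hr L 1

theorem sum_blockSum_mul_pow_modEq {b r : ℕ} (hb : 0 < b) (hr : 0 < r) (L : List ℕ) :
    ∑ i ∈ range r, blockSum L r i * b ^ i ≡ Nat.ofDigits b L [MOD b ^ r - 1] := by
  rw [sum_blockSum_mul hr, Nat.ofDigits_eq_sum_range_getD]
  exact Nat.ModEq.sum fun j _ => ((Nat.pow_modEq_pow_mod hb r j).mul_left _).symm

/-- With `0 ≤ m ≤ p^r - 1`, `m' ≡ m (mod p^r - 1)`, the digit sums agree, `f(m') = f(m)`,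
if and only if for every `i < r` the sum of the base-`p` digits of `m'` at positions
congruent to `i` mod `r` equals the `i`-th base-`p` digit of `m`. -/
theorem digitSum_eq_iff_blocked_digits (p r m m' : ℕ) (hp : p.Prime) (hr : 1 < r)
    (hm : m ≤ p ^ r - 1) (hmod : m' ≡ m [MOD p ^ r - 1]) :
    (Nat.digits p m').sum = (Nat.digits p m).sum ↔
      ∀ i < r,
        (∑ j ∈ Finset.range ((Nat.digits p m').length),
            if j % r = i then (Nat.digits p m').getD j 0 else 0)
          = (Nat.digits p m).getD i 0 := by
  have hp2 := hp.two_le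
  have hr0 : 0 < r := by omega
  have hm' : m < p ^ r := by have := Nat.one_le_pow r p hp.pos; omega
  have hsum := sum_blockSum hr0 (Nat.digits p m')
  have hblock : ∑ i ∈ range r, blockSum (Nat.digits p m') r i * p ^ i ≡ m [MOD p ^ r - 1] := by
    have := sum_blockSum_mul_pow_modEq hp.pos hr0 (Nat.digits p m')
    rw [Nat.ofDigits_digits] at this
    exact this.trans hmod
  change _ ↔ ∀ i < r, blockSum (Nat.digits p m') r i = _
  constructor
  · exact fun h => Nat.eq_getD_digits_of_modEq_of_sum_eq hp2 hm' hblock (hsum.trans h)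
  · intro h
    rw [← hsum, Nat.sum_digits_eq_sum_range_getD hp.one_lt hm']
    exact sum_congr rfl fun i hi => h i (mem_range.mp hi)
end

section
/- Let p be a prime and (m_n)_{n≥1} a sequence of natural numbers with 0 ≤ m_n < p^{n!} − 1 and m_i ≡ m_j (mod p^{i!} − 1) whenever i < j. If the base-p digit sums f(m_n) are unbounded, then for every r ∈ ℕ* there exist s > r and k ∈ ℕ* such that the binomial coefficient C(m_s, k(p^{r!} − 1)) is not divisible by p. -/
/-!
Write the base-`p` digits of `m_s` as `m_s = ∑ dᵢ pⁱ` and think of it as a row of `∑ dᵢ`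
unit summands `pⁱ`, lowest first. If the digit sum is at least `q = p^{r!} - 1`, two of the
`q + 1` initial segments of this row have sums congruent mod `q`; the block between them is a
positive multiple `k q` whose digits are bounded by those of `m_s`, so `p ∤ C(m_s, k q)` by
Lucas' theorem. Since `m_n < p^{n!}` has digit sum at most `(p - 1) n!`, a large digit sum
forces `s > r`.
-/

open Nat

/-- The digits of the number `ofDigits p D` lying between positions `a` and `b` of the row of
unit summands, counted from the lowest digit. -/
def List.digitSlice : List ℕ → ℕ → ℕ → List ℕ
  | [], _, _ => []
  | d :: D, a, b => (min d b - min d a) :: digitSlice D (a - d) (b - d)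

namespace List

theorem forall₂_digitSlice_le (D : List ℕ) (a b : ℕ) :
    Forall₂ (· ≤ ·) (D.digitSlice a b) D := by
  induction D generalizing a b with
  | nil => exact .nil
  | cons d D ih => exact .cons (by omega) (ih _ _)

theorem sum_digitSlice (D : List ℕ) {a b : ℕ} (hab : a ≤ b) :
    (D.digitSlice a b).sum = min D.sum b - min D.sum a := by
  induction D generalizing a b with
  | nil => simp [digitSlice]
  | cons d D ih =>
    simp only [digitSlice, sum_cons, ih (Nat.sub_le_sub_right hab d)]
    omega

theorem ofDigits_digitSlice_add (p : ℕ) (D : List ℕ) {a b c : ℕ} (hab : a ≤ b)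
    (hbc : b ≤ c) :
    ofDigits p (D.digitSlice a b) + ofDigits p (D.digitSlice b c) =
      ofDigits p (D.digitSlice a c) := by
  induction D generalizing a b c with
  | nil => simp [digitSlice]
  | cons d D ih =>
    simp only [digitSlice, ofDigits_cons,
      ← ih (Nat.sub_le_sub_right hab d) (Nat.sub_le_sub_right hbc d)]
    have : min d b - min d a + (min d c - min d b) = min d c - min d a := by omega
    rw [← this]
    ring

end List

theorem Nat.Prime.not_dvd_choose_ofDigits {p : ℕ} (hp : p.Prime) {K N : List ℕ}
    (hKN : List.Forall₂ (· ≤ ·) K N) (hN : ∀ x ∈ N, x < p) :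
    ¬ p ∣ (ofDigits p N).choose (ofDigits p K) := by
  induction hKN with
  | nil => simpa using hp.one_lt.ne'
  | @cons k n K N hkn _ ih =>
    have hn : n < p := hN n List.mem_cons_self
    have mod_div {x : ℕ} (X : List ℕ) (hx : x < p) :
        ofDigits p (x :: X) % p = x ∧ ofDigits p (x :: X) / p = ofDigits p X := by
      rw [ofDigits_cons, Nat.add_mul_mod_self_left, Nat.add_mul_div_left _ _ hp.pos,
        Nat.mod_eq_of_lt hx, Nat.div_eq_of_lt hx, zero_add]
      exact ⟨rfl, rfl⟩
    obtain ⟨hn_mod, hn_div⟩ := mod_div N hn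
    obtain ⟨hk_mod, hk_div⟩ := mod_div K (hkn.trans_lt hn)
    have := Fact.mk hp
    have lucas : (ofDigits p (n :: N)).choose (ofDigits p (k :: K)) ≡
        n.choose k * (ofDigits p N).choose (ofDigits p K) [MOD p] := by
      have := Choose.choose_modEq_choose_mod_mul_choose_div_nat (p := p)
        (n := ofDigits p (n :: N)) (k := ofDigits p (k :: K))
      rwa [hn_mod, hn_div, hk_mod, hk_div] at this
    rw [lucas.dvd_iff dvd_rfl, hp.dvd_mul, not_or]
    exact ⟨(hp.coprime_iff_not_dvd).1 (coprime_choose_of_lt hp hn hkn),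
      ih fun x hx => hN x (List.mem_cons_of_mem n hx)⟩

theorem List.exists_pos_dvd_ofDigits_digitSlice {p q : ℕ} (hp : 0 < p) (hq : 0 < q) (D : List ℕ)
    (hqD : q ≤ D.sum) :
    ∃ a b, 0 < ofDigits p (D.digitSlice a b) ∧ q ∣ ofDigits p (D.digitSlice a b) := by
  obtain ⟨a, ha, b, hb, hne, heq⟩ := Finset.exists_ne_map_eq_of_card_lt_of_maps_to
    (s := Finset.range (q + 1)) (t := Finset.range q)
    (f := fun c => ofDigits p (D.digitSlice 0 c) % q) (by simp)
    (fun c _ => by simpa using Nat.mod_lt _ hq)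
  wlog hab : a < b generalizing a b
  · exact this b hb a ha hne.symm heq.symm (by omega)
  rw [Finset.mem_range] at ha hb
  refine ⟨a, b, ?_, ?_⟩
  · calc 0 < (D.digitSlice a b).sum := by rw [D.sum_digitSlice hab.le]; omega
      _ ≤ _ := sum_le_ofDigits _ hp
  · rw [← Nat.modEq_zero_iff_dvd]
    apply Nat.ModEq.add_left_cancel' (ofDigits p (D.digitSlice 0 a))
    rw [ofDigits_digitSlice_add p D (zero_le a) hab.le, add_zero]
    exact heq.symm

theorem Nat.Prime.exists_dvd_not_dvd_choose_of_le_digits_sum {p q n : ℕ} (hp : p.Prime)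
    (hq : 0 < q) (hqn : q ≤ (p.digits n).sum) : ∃ k, 0 < k ∧ q ∣ k ∧ ¬ p ∣ n.choose k := by
  obtain ⟨a, b, hpos, hdvd⟩ := (p.digits n).exists_pos_dvd_ofDigits_digitSlice hp.pos hq hqn
  have := hp.not_dvd_choose_ofDigits ((p.digits n).forall₂_digitSlice_le a b)
    fun x hx => digits_lt_base hp.one_lt hx
  rw [ofDigits_digits] at this
  exact ⟨_, hpos, hdvd, this⟩

theorem Nat.digits_sum_le_of_lt_pow {p n a : ℕ} (hp : 1 < p) (hn : n < p ^ a) :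
    (p.digits n).sum ≤ (p - 1) * a :=
  calc (p.digits n).sum ≤ (p.digits n).length * (p - 1) := by
        simpa using List.sum_le_card_nsmul _ (p - 1) fun x hx =>
          Nat.le_sub_one_of_lt (digits_lt_base hp hx)
    _ ≤ a * (p - 1) := Nat.mul_le_mul_right _ ((digits_length_le_iff hp n).2 hn)
    _ = (p - 1) * a := mul_comm _ _

theorem unbounded_digitSum_choose_general (p : ℕ) (hp : p.Prime) (m : ℕ → ℕ)
    (hlt : ∀ n, 1 ≤ n → m n < p ^ (Nat.factorial n) - 1)
    (hub : ∀ C : ℕ, ∃ n, 1 ≤ n ∧ C < (Nat.digits p (m n)).sum) :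
    ∀ r, 1 ≤ r → ∃ s, r < s ∧ ∃ k, 1 ≤ k ∧
      ¬ p ∣ Nat.choose (m s) (k * (p ^ (Nat.factorial r) - 1)) := by
  intro r _
  set q := p ^ r.factorial - 1
  have hq : 0 < q := Nat.sub_pos_of_lt (Nat.one_lt_pow (factorial_ne_zero r) hp.one_lt)
  obtain ⟨s, hs, hsum⟩ := hub ((p - 1) * r.factorial + q)
  have hrs : r < s := by
    by_contra! hsr
    have hms : m s < p ^ r.factorial := (hlt s hs).trans_le <|
      (Nat.sub_le _ _).trans (Nat.pow_le_pow_right hp.pos (factorial_le hsr))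
    have := digits_sum_le_of_lt_pow hp.one_lt hms
    omega
  obtain ⟨_, ht, ⟨k, rfl⟩, hchoose⟩ :=
    hp.exists_dvd_not_dvd_choose_of_le_digits_sum (n := m s) hq (by omega)
  exact ⟨s, hrs, k, Nat.pos_of_mul_pos_left ht, by rwa [mul_comm]⟩

/-- If a compatible sequence `(m_n)` (with `m_n < p^{n!} - 1` and `m_i ≡ m_j (mod p^{i!} - 1)`
for `i < j`) has unbounded base-`p` digit sums, then for every `r ≥ 1` there exist `s > r`
and `k ≥ 1` with `p ∤ C(m_s, k(p^{r!} - 1))`. -/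
theorem unbounded_digitSum_choose (p : ℕ) (hp : p.Prime) (m : ℕ → ℕ)
    (hlt : ∀ n, 1 ≤ n → m n < p ^ (Nat.factorial n) - 1)
    (hcomp : ∀ i j, 1 ≤ i → i < j → m j ≡ m i [MOD p ^ (Nat.factorial i) - 1])
    (hub : ∀ C : ℕ, ∃ n, 1 ≤ n ∧ C < (Nat.digits p (m n)).sum) :
    ∀ r, 1 ≤ r → ∃ s, r < s ∧ ∃ k, 1 ≤ k ∧
      ¬ p ∣ Nat.choose (m s) (k * (p ^ (Nat.factorial r) - 1)) :=
  unbounded_digitSum_choose_general p hp m hlt hub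
end

section
/- Let p be a prime and (m_n)_{n≥1} a sequence of natural numbers with 0 ≤ m_n < p^{n!} − 1 and m_i ≡ m_j (mod p^{i!} − 1) whenever i < j. If for every r ∈ ℕ* there exist s > r and k ∈ ℕ* such that p does not divide C(m_s, k(p^{r!} − 1)), then the base-p digit sums f(m_n) are unbounded. -/
open Finset

/-- Truncated-sum version of `Nat.sub_one_mul_sum_log_div_pow_eq_sub_sum_digits`
with an arbitrary large enough bound. -/
lemma aux_sum_div_pow (p : ℕ) (hp : 1 < p) (n B : ℕ) (hB : Nat.log p n < B) :
    (p - 1) * ∑ i ∈ range B, n / p ^ (i + 1) = n - (Nat.digits p n).sum := by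
  rw [← Nat.sub_one_mul_sum_log_div_pow_eq_sub_sum_digits n]
  congr 1
  refine (Finset.sum_subset (Finset.range_subset_range.mpr hB) ?_).symm
  intro i hi hni
  simp only [Finset.mem_range, not_lt] at hi hni
  apply Nat.div_eq_of_lt
  calc n < p ^ (Nat.log p n + 1) := Nat.lt_pow_succ_log_self hp n
    _ ≤ p ^ (i + 1) := Nat.pow_le_pow_right (le_of_lt hp) (by omega)

lemma aux_digitSum_eq (p : ℕ) (hp : 1 < p) (n B : ℕ) (hB : Nat.log p n < B) :
    (Nat.digits p n).sum + (p - 1) * ∑ i ∈ range B, n / p ^ (i + 1) = n := by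
  rw [aux_sum_div_pow p hp n B hB]
  have := Nat.digit_sum_le p n
  omega

/-- Subadditivity of base-`p` digit sums. -/
lemma digitSum_add_le (p : ℕ) (hp : 1 < p) (a b : ℕ) :
    (Nat.digits p (a + b)).sum ≤ (Nat.digits p a).sum + (Nat.digits p b).sum := by
  set B := Nat.log p (a + b) + 1 with hBdef
  have hBa : Nat.log p a < B := lt_of_le_of_lt (Nat.log_mono_right (Nat.le_add_right a b)) (by omega)
  have hBb : Nat.log p b < B := lt_of_le_of_lt (Nat.log_mono_right (Nat.le_add_left b a)) (by omega)
  have hBab : Nat.log p (a + b) < B := by omega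
  have ha := aux_digitSum_eq p hp a B hBa
  have hb := aux_digitSum_eq p hp b B hBb
  have hab := aux_digitSum_eq p hp (a + b) B hBab
  have hsum : ∑ i ∈ range B, a / p ^ (i + 1) + ∑ i ∈ range B, b / p ^ (i + 1) ≤
      ∑ i ∈ range B, (a + b) / p ^ (i + 1) := by
    rw [← Finset.sum_add_distrib]
    exact Finset.sum_le_sum fun i _ => Nat.add_div_le_add_div a b (p ^ (i + 1))
  nlinarith [hsum, ha, hb, hab]

/-- Digit sum of `p ^ N - 1` is `N * (p - 1)`. -/
lemma digitSum_pow_sub_one (p : ℕ) (hp : 1 < p) (N : ℕ) :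
    (Nat.digits p (p ^ N - 1)).sum = N * (p - 1) := by
  induction N with
  | zero => simp
  | succ N ih =>
    have h1 : p ^ (N + 1) - 1 = (p - 1) + p * (p ^ N - 1) := by
      have h2 : 1 ≤ p ^ N := Nat.one_le_pow _ _ (by omega)
      have h3 : p ^ (N + 1) = p * p ^ N := pow_succ' p N
      have h4 : p * (p ^ N - 1) = p * p ^ N - p := by
        rw [Nat.mul_sub, mul_one]
      have h5 : p ≤ p * p ^ N := Nat.le_mul_of_pos_right p (by omega)
      omega
    rw [h1, Nat.digits_add p hp (p - 1) (p ^ N - 1) (by omega) (Or.inl (by omega))]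
    simp [ih]
    ring

/-- A positive multiple of `p ^ N - 1` has base-`p` digit sum at least `N * (p - 1)`. -/
lemma digitSum_of_dvd (p : ℕ) (hp : 1 < p) (N : ℕ) :
    ∀ M : ℕ, 0 < M → (p ^ N - 1) ∣ M → N * (p - 1) ≤ (Nat.digits p M).sum := by
  intro M
  induction M using Nat.strong_induction_on with
  | _ M ih =>
    intro hM hdvd
    have hpN : 2 ≤ p ^ N ∨ N = 0 := by
      rcases Nat.eq_zero_or_pos N with h | h
      · exact Or.inr h
      · exact Or.inl (le_trans hp (Nat.le_self_pow (by omega) p))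
    rcases hpN with hpN | rfl
    swap
    · simp
    by_cases hsmall : M < p ^ N
    · -- then M = p ^ N - 1
      have : M = p ^ N - 1 := by
        rcases hdvd with ⟨c, rfl⟩
        rcases Nat.eq_zero_or_pos c with rfl | hc
        · simp at hM
        · have hc1 : c = 1 := by
            by_contra hc2
            have h3 : (p ^ N - 1) * 2 ≤ (p ^ N - 1) * c := Nat.mul_le_mul_left _ (by omega)
            have h2 : (p ^ N - 1) * c < p ^ N := hsmall
            omega
          rw [hc1, mul_one]
      rw [this, digitSum_pow_sub_one p hp N]
    · push_neg at hsmall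
      obtain ⟨q, hq⟩ : ∃ q, q = M % p ^ N := ⟨_, rfl⟩
      obtain ⟨t, ht⟩ : ∃ t, t = M / p ^ N := ⟨_, rfl⟩
      have hqt : M = q + p ^ N * t := by
        rw [hq, ht, Nat.mod_add_div]
      have hqlt : q < p ^ N := by
        rw [hq]; exact Nat.mod_lt _ (by omega)
      have htpos : 0 < t := by
        rw [ht]; exact Nat.div_pos hsmall (by omega)
      -- digit sum splits
      have hlen : (Nat.digits p q).length ≤ N := by
        rcases Nat.eq_zero_or_pos q with h0 | hqpos
        · simp [h0]
        · rw [Nat.digits_len p q hp (by omega)]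
          have := Nat.log_lt_of_lt_pow (by omega : q ≠ 0) hqlt
          omega
      have hsplit : (Nat.digits p M).sum = (Nat.digits p q).sum + (Nat.digits p t).sum := by
        have := Nat.digits_append_zeroes_append_digits (b := p)
          (k := N - (Nat.digits p q).length) (m := t) (n := q) hp htpos
        have hNe : (Nat.digits p q).length + (N - (Nat.digits p q).length) = N := by omega
        rw [hNe] at this
        rw [hqt, ← this]
        simp
      -- q + t is a smaller positive multiple
      have h5 : (p ^ N - 1) * t + t = p ^ N * t := by
        have : t ≤ p ^ N * t := Nat.le_mul_of_pos_left t (by omega)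
        rw [Nat.sub_mul, one_mul]
        omega
      have h7 : 2 * t ≤ p ^ N * t := Nat.mul_le_mul_right t hpN
      have hqtdvd : (p ^ N - 1) ∣ (q + t) := by
        have hMeq : M = (p ^ N - 1) * t + (q + t) := by omega
        have h2 : (p ^ N - 1) ∣ (p ^ N - 1) * t := Dvd.intro t rfl
        exact (Nat.dvd_add_right h2).mp (by rw [← hMeq]; exact hdvd)
      have hqtlt : q + t < M := by omega
      have hqtpos : 0 < q + t := by omega
      calc N * (p - 1) ≤ (Nat.digits p (q + t)).sum := ih _ hqtlt hqtpos hqtdvd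
        _ ≤ (Nat.digits p q).sum + (Nat.digits p t).sum := digitSum_add_le p hp q t
        _ = (Nat.digits p M).sum := hsplit.symm

/-- Kummer consequence: if `p ∤ C(n, k)` then the digit sum of `k` is at most that of `n`. -/
lemma digitSum_le_of_not_dvd_choose (p : ℕ) (hp : p.Prime) (n k : ℕ)
    (h : ¬ p ∣ Nat.choose n k) :
    (Nat.digits p k).sum ≤ (Nat.digits p n).sum := by
  have hkn : k ≤ n := by
    by_contra hc
    push_neg at hc
    rw [Nat.choose_eq_zero_of_lt hc] at h
    exact h (dvd_zero p)
  haveI : Fact p.Prime := ⟨hp⟩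
  have hv : padicValNat p (Nat.choose n k) = 0 := padicValNat.eq_zero_of_not_dvd h
  have heq := sub_one_mul_padicValNat_choose_eq_sub_sum_digits (p := p) hkn
  rw [hv, mul_zero] at heq
  have hle : (Nat.digits p k).sum + (Nat.digits p (n - k)).sum ≤ (Nat.digits p n).sum := by omega
  omega

/-- Converse: if for every `r ≥ 1` there exist `s > r` and `k ≥ 1` with
`p ∤ C(m_s, k(p^{r!} - 1))`, then the base-`p` digit sums of the compatible sequence
`(m_n)` are unbounded. -/
theorem choose_digitSum_unbounded (p : ℕ) (hp : p.Prime) (m : ℕ → ℕ)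
    (hlt : ∀ n, 1 ≤ n → m n < p ^ (Nat.factorial n) - 1)
    (hcomp : ∀ i j, 1 ≤ i → i < j → m j ≡ m i [MOD p ^ (Nat.factorial i) - 1])
    (hch : ∀ r, 1 ≤ r → ∃ s, r < s ∧ ∃ k, 1 ≤ k ∧
      ¬ p ∣ Nat.choose (m s) (k * (p ^ (Nat.factorial r) - 1))) :
    ∀ C : ℕ, ∃ n, 1 ≤ n ∧ C < (Nat.digits p (m n)).sum := by
  intro C
  have hp2 : 1 < p := hp.one_lt
  obtain ⟨s, hrs, k, hk, hdvd⟩ := hch (C + 1) (by omega)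
  refine ⟨s, by omega, ?_⟩
  set d := k * (p ^ Nat.factorial (C + 1) - 1) with hd
  have hdpos : 0 < d := by
    have : 2 ≤ p ^ Nat.factorial (C + 1) :=
      le_trans hp2 (Nat.le_self_pow (Nat.factorial_ne_zero _) p)
    exact Nat.mul_pos hk (by omega)
  have h1 : Nat.factorial (C + 1) * (p - 1) ≤ (Nat.digits p d).sum :=
    digitSum_of_dvd p hp2 _ d hdpos ⟨k, mul_comm _ _⟩
  have h2 : (Nat.digits p d).sum ≤ (Nat.digits p (m s)).sum :=
    digitSum_le_of_not_dvd_choose p hp _ _ hdvd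
  have h3 : C + 1 ≤ Nat.factorial (C + 1) := Nat.self_le_factorial _
  have h4 : 1 ≤ p - 1 := by omega
  have h5 : (C + 1) * 1 ≤ Nat.factorial (C + 1) * (p - 1) := Nat.mul_le_mul h3 h4
  omega
end

section
/- Let p be a prime and (m_n)_{n≥1} a sequence with 0 ≤ m_n < p^{n!} − 1 and m_i ≡ m_j (mod p^{i!} − 1) for i < j. Then the base-p digit sum sequence f(m_n) is non-decreasing in n. -/
private lemma sum_digits_eq {p : ℕ} (hp : 2 ≤ p) (n : ℕ) :
    (Nat.digits p n).sum = n % p + (Nat.digits p (n / p)).sum := by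
  rcases Nat.eq_zero_or_pos n with rfl | hn
  · simp
  · rw [Nat.digits_def' hp hn]; simp

private lemma sum_digits_split {p : ℕ} (hp : 2 ≤ p) :
    ∀ k a b, b < p ^ k →
      (Nat.digits p (p ^ k * a + b)).sum = (Nat.digits p a).sum + (Nat.digits p b).sum := by
  intro k
  induction k with
  | zero =>
    intro a b hb
    have hb0 : b = 0 := by simpa using hb
    subst hb0; simp
  | succ k ih =>
    intro a b hb
    have hpp : 0 < p := by omega
    have key : p ^ (k+1) * a + b = p * (p ^ k * a + b / p) + b % p := by
      conv_lhs => rw [← Nat.div_add_mod b p]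
      rw [pow_succ']; ring
    have hbp : b / p < p ^ k := Nat.div_lt_of_lt_mul (by rw [mul_comm, ← pow_succ]; exact hb)
    rw [key, sum_digits_eq hp, Nat.mul_add_mod, Nat.mul_add_div hpp,
      Nat.div_eq_of_lt (Nat.mod_lt _ hpp), add_zero, ih a (b / p) hbp,
      sum_digits_eq hp b, Nat.mod_mod_of_dvd b dvd_rfl]
    omega

private lemma sum_digits_add_le {p : ℕ} (hp : 2 ≤ p) :
    ∀ n a b, a + b ≤ n → (Nat.digits p (a + b)).sum ≤ (Nat.digits p a).sum + (Nat.digits p b).sum := by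
  intro n
  induction n using Nat.strong_induction_on with
  | _ n IH =>
    intro a b hab
    rcases Nat.eq_zero_or_pos (a + b) with h0 | hpos
    · simp [h0, Nat.eq_zero_of_add_eq_zero_right h0, Nat.eq_zero_of_add_eq_zero_left h0]
    have hpp : 0 < p := by omega
    have hda := Nat.div_add_mod a p
    have hdb := Nat.div_add_mod b p
    have hma : a % p < p := Nat.mod_lt _ hpp
    have hmb : b % p < p := Nat.mod_lt _ hpp
    have hfa : (Nat.digits p a).sum = a % p + (Nat.digits p (a / p)).sum := sum_digits_eq hp a
    have hfb : (Nat.digits p b).sum = b % p + (Nat.digits p (b / p)).sum := sum_digits_eq hp b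
    by_cases hcarry : a % p + b % p < p
    · have hdist : p * ((a / p) + (b / p)) = p * (a / p) + p * (b / p) := by ring
      have key : a + b = p * ((a / p) + (b / p)) + (a % p + b % p) := by omega
      have hsum : (Nat.digits p (a + b)).sum
          = (a % p + b % p) + (Nat.digits p ((a / p) + (b / p))).sum := by
        rw [key, sum_digits_eq hp, Nat.mul_add_mod, Nat.mod_eq_of_lt hcarry,
          Nat.mul_add_div hpp, Nat.div_eq_of_lt hcarry, add_zero]
      have hlt : (a / p) + (b / p) < n := by
        have h1 : (a / p) ≤ a := Nat.div_le_self a p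
        have h2 : (b / p) ≤ b := Nat.div_le_self b p
        rcases Nat.eq_zero_or_pos a with rfl | hA
        · have : (b / p) < b := Nat.div_lt_self (by omega) (by omega)
          omega
        · have : (a / p) < a := Nat.div_lt_self hA (by omega)
          omega
      have := IH _ hlt (a / p) (b / p) le_rfl
      omega
    · have hdist : p * ((a / p) + (b / p) + 1) = p * (a / p) + p * (b / p) + p := by ring
      have key : a + b = p * ((a / p) + (b / p) + 1) + (a % p + b % p - p) := by omega
      have hr : a % p + b % p - p < p := by omega
      have hsum : (Nat.digits p (a + b)).sum
          = (a % p + b % p - p) + (Nat.digits p ((a / p) + (b / p) + 1)).sum := by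
        rw [key, sum_digits_eq hp, Nat.mul_add_mod, Nat.mod_eq_of_lt hr,
          Nat.mul_add_div hpp, Nat.div_eq_of_lt hr, add_zero]
      have hA : 0 < a := by omega
      have hB : 0 < b := by omega
      have hlt : (a / p) + (b / p) + 1 < n := by
        have h1 : (a / p) < a := Nat.div_lt_self hA (by omega)
        have h2 : (b / p) < b := Nat.div_lt_self hB (by omega)
        omega
      have h1 : (Nat.digits p 1).sum = 1 := by
        rw [Nat.digits_def' hp Nat.one_pos, Nat.mod_eq_of_lt (by omega : 1 < p),
          Nat.div_eq_of_lt (by omega : 1 < p)]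
        simp
      have hIH1 := IH _ hlt ((a / p) + (b / p)) 1 le_rfl
      have hIH2 := IH _ (by omega : (a / p) + (b / p) < n) (a / p) (b / p) le_rfl
      omega

private lemma key_lemma {p : ℕ} (hp : 2 ≤ p) (k : ℕ) (hk : 1 ≤ k) :
    ∀ n r, r < p ^ k - 1 → n ≡ r [MOD p ^ k - 1] →
      (Nat.digits p r).sum ≤ (Nat.digits p n).sum := by
  have hpk : 2 ≤ p ^ k := le_trans hp (Nat.le_self_pow (by omega) p)
  intro n
  induction n using Nat.strong_induction_on with
  | _ n IH =>
    intro r hr hmod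
    by_cases hn : n < p ^ k - 1
    · have : n = r := by
        have h1 := (Nat.mod_eq_of_lt hn) ▸ (Nat.mod_eq_of_lt hr) ▸ hmod
        unfold Nat.ModEq at hmod
        rw [Nat.mod_eq_of_lt hn, Nat.mod_eq_of_lt hr] at hmod
        exact hmod
      exact this ▸ le_rfl
    by_cases hn2 : n < p ^ k
    · -- n = p^k - 1, so n ≡ 0, hence r = 0
      have hn3 : n = p ^ k - 1 := by omega
      have : r % (p ^ k - 1) = 0 := by
        have := hmod.symm
        unfold Nat.ModEq at this
        rw [hn3, Nat.mod_self] at this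
        exact this
      have : r = 0 := by rwa [Nat.mod_eq_of_lt hr] at this
      simp [this]
    · -- n ≥ p^k : split
      set a := n / p ^ k with ha
      set b := n % p ^ k with hb
      have hsplit : n = p ^ k * a + b := (Nat.div_add_mod n (p ^ k)).symm
      have hblt : b < p ^ k := Nat.mod_lt _ (by omega)
      have hA : 0 < a := Nat.div_pos (by omega) (by omega)
      have heq : (Nat.digits p n).sum = (Nat.digits p a).sum + (Nat.digits p b).sum := by
        rw [hsplit]; exact sum_digits_split hp k a b hblt
      have hpow : p ^ k ≡ 1 [MOD p ^ k - 1] := by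
        show p ^ k % (p ^ k - 1) = 1 % (p ^ k - 1)
        obtain ⟨q, hq⟩ : ∃ q, p ^ k = q + 1 := ⟨p ^ k - 1, by omega⟩
        rw [hq, Nat.add_sub_cancel, Nat.add_mod_left]
      have hcong : a + b ≡ r [MOD p ^ k - 1] := by
        have h2 : p ^ k * a + b ≡ 1 * a + b [MOD p ^ k - 1] :=
          Nat.ModEq.add_right b (Nat.ModEq.mul_right a hpow)
        have h3 : a + b ≡ n [MOD p ^ k - 1] := by
          rw [hsplit]; simpa using h2.symm
        exact h3.trans hmod
      have hlt : a + b < n := by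
        have h2a : 2 * a ≤ p ^ k * a := Nat.mul_le_mul_right a hpk
        omega
      calc (Nat.digits p r).sum ≤ (Nat.digits p (a + b)).sum := IH _ hlt r hr hcong
        _ ≤ (Nat.digits p a).sum + (Nat.digits p b).sum := sum_digits_add_le hp (a+b) a b le_rfl
        _ = (Nat.digits p n).sum := heq.symm

/-- For a compatible sequence `(m_n)` (with `m_n < p^{n!} - 1` and
`m_i ≡ m_j (mod p^{i!} - 1)` for `i < j`), the base-`p` digit sums are non-decreasing. -/
theorem digitSum_monotone (p : ℕ) (hp : p.Prime) (m : ℕ → ℕ)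
    (hlt : ∀ n, 1 ≤ n → m n < p ^ (Nat.factorial n) - 1)
    (hcomp : ∀ i j, 1 ≤ i → i < j → m j ≡ m i [MOD p ^ (Nat.factorial i) - 1]) :
    ∀ i j, 1 ≤ i → i ≤ j → (Nat.digits p (m i)).sum ≤ (Nat.digits p (m j)).sum := by
  intro i j hi hij
  rcases eq_or_lt_of_le hij with rfl | hij
  · exact le_rfl
  · exact key_lemma hp.two_le (Nat.factorial i) (Nat.one_le_iff_ne_zero.mpr (Nat.factorial_ne_zero i))
      (m j) (m i) (hlt i hi) (hcomp i j hi hij)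
end

section
/- Let p be a prime and (m_n)_{n≥1} a sequence with 0 ≤ m_n < p^{n!} − 1 and m_i ≡ m_j (mod p^{i!} − 1) for i < j, not all m_n equal to 0. If the digit sums f(m_n) are bounded, then there exist N ∈ ℕ*, l ≥ 1, digits 0 < θ_1, …, θ_l < p, and exponent sequences g_{i,n} ∈ ℕ (1 ≤ i ≤ l, n ≥ N) with 0 ≤ g_{i,n} < n!, g_{i,n+1} ≡ g_{i,n} (mod n!), and g_{i,n} ≠ g_{j,n} for i ≠ j, such that m_n = ∑_{i=1}^l θ_i p^{g_{i,n}} for all n ≥ N. -/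
/-!
Write `S` for the base-`p` digit sum. Adding in base `p` loses `p - 1` in digit sum per carry
(Legendre), so `S (x + y) ≤ S x + S y`, with equality exactly when the digits add position by
position. Since `p ^ K ≡ 1 [MOD p ^ K - 1]`, reducing `a = p ^ K * q + s` modulo `p ^ K - 1` is
the same as reducing `q + s`; by induction `S (a % (p ^ K - 1)) ≤ S a`, and in the equality case
the digits of `a % (p ^ K - 1)` are those of `a` with positions folded modulo `K`.

Hence `S (m n)` is nondecreasing and bounded, so eventually constant, and from then on the digits
of `m n` are those of `m (n + 1)` with positions reduced modulo `n!`. The number of nonzero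
digits is then nondecreasing and bounded by the digit sum, so eventually constant as well; from
that point on, reduction modulo `n!` is injective on nonzero digit positions, and following each
nonzero digit of `m N` up the tower gives the positions `g i n`.
-/

open Finset

theorem List.toFinsupp_sum_mul_pow (b : ℕ) (l : List ℕ) :
    l.toFinsupp.sum (fun i a => a * b ^ i) = Nat.ofDigits b l := by
  induction l with
  | nil => simp
  | cons x l ih =>
    rw [List.toFinsupp_cons_eq_single_add_embDomain,
      Finsupp.sum_add_index' (by simp) (by intros; ring), Finsupp.sum_single_index (by simp),
      Finsupp.sum_embDomain, Nat.ofDigits_cons, ← ih, Finsupp.mul_sum]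
    simp only [addRightEmbedding_apply, pow_zero, mul_one]
    congr 1
    exact Finsupp.sum_congr fun _ _ => by ring

namespace Finsupp

variable {α β M : Type*} [AddCommMonoid M]

theorem card_support_mapDomain_le (f : α → β) (x : α →₀ M) :
    #(x.mapDomain f).support ≤ #x.support := by
  classical
  exact (card_le_card mapDomain_support).trans card_image_le

theorem injOn_of_card_support_le_mapDomain {f : α → β} {x : α →₀ M}
    (h : #x.support ≤ #(x.mapDomain f).support) : Set.InjOn f x.support := by
  classical
  rw [← card_image_iff]
  exact le_antisymm card_image_le (h.trans (card_le_card mapDomain_support))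

theorem card_support_le_sum (x : α →₀ ℕ) : #x.support ≤ x.sum fun _ a => a := by
  rw [card_eq_sum_ones, Finsupp.sum]
  exact Finset.sum_le_sum fun a ha => Nat.one_le_iff_ne_zero.2 (mem_support_iff.1 ha)

theorem eq_sum_single_of_injective {ι : Type*} [Fintype ι] {x : α →₀ M} {g : ι → α}
    (hg : Function.Injective g) (hmem : ∀ i, g i ∈ x.support)
    (hcard : #x.support ≤ Fintype.card ι) :
    x = ∑ i, single (g i) (x (g i)) := by
  classical
  have himage : univ.image g = x.support :=
    eq_of_subset_of_card_le (image_subset_iff.2 fun i _ => hmem i)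
      (by rwa [card_image_of_injective _ hg, card_univ])
  conv_lhs => rw [← x.sum_single, Finsupp.sum, ← himage]
  rw [sum_image hg.injOn]

section Tower

variable {v : ℕ → ℕ →₀ M} {c : ℕ → ℕ} {N : ℕ}

theorem eq_mapDomain_mod_of_le (hc : ∀ {k n}, k ≤ n → c k ∣ c n)
    (hv : ∀ n ≥ N, v n = (v (n + 1)).mapDomain (· % c n)) {n : ℕ} (hn : N ≤ n) :
    v N = (v n).mapDomain (· % c N) := by
  induction n, hn using Nat.le_induction with
  | base =>
    calc v N = (v (N + 1)).mapDomain ((· % c N) ∘ (· % c N)) := by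
          simpa [Function.comp_def] using hv N le_rfl
      _ = (v N).mapDomain (· % c N) := by rw [mapDomain_comp, ← hv N le_rfl]
  | succ n hn ih =>
    rw [ih, hv n hn, ← mapDomain_comp]
    congr 1
    funext s
    exact Nat.mod_mod_of_dvd s (hc hn)

theorem exists_enumeration_of_mapDomain_mod (hc : ∀ {k n}, k ≤ n → c k ∣ c n)
    (hv : ∀ n ≥ N, v n = (v (n + 1)).mapDomain (· % c n))
    (hcard : ∀ n ≥ N, #(v n).support = #(v N).support) :
    ∃ θ : Fin #(v N).support → M, ∃ g : Fin #(v N).support → ℕ → ℕ,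
      (∀ i n, N ≤ n → g i n ∈ (v n).support ∧ v n (g i n) = θ i) ∧
      (∀ i n, N ≤ n → g i (n + 1) % c n = g i n) ∧
      (∀ n ≥ N, Function.Injective (g · n)) ∧
      (∀ n ≥ N, v n = ∑ i, single (g i n) (θ i)) := by
  classical
  have hfold : ∀ n ≥ N, v N = (v n).mapDomain (· % c N) := fun _ =>
    eq_mapDomain_mod_of_le hc hv
  have hinj : ∀ n ≥ N, Set.InjOn (· % c N) (v n).support := fun n hn =>
    injOn_of_card_support_le_mapDomain (by rw [← hfold n hn, hcard n hn])
  have hinj_succ : ∀ n ≥ N, Set.InjOn (· % c n) (v (n + 1)).support := fun n hn =>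
    injOn_of_card_support_le_mapDomain (by rw [← hv n hn, hcard n hn, hcard (n + 1) (by omega)])
  set E := (v N).support.equivFin.symm
  -- `g i n` is the point of `(v n).support` over `E i`, unique by `hinj`.
  have hlift : ∀ i n, ∃ s, N ≤ n → s ∈ (v n).support ∧ s % c N = E i := by
    intro i n
    by_cases hn : N ≤ n
    · have hsupp : (v N).support = (v n).support.image (· % c N) := by
        rw [hfold n hn]
        exact mapDomain_support_of_injOn _ (hinj n hn)
      obtain ⟨s, hs, hsE⟩ := mem_image.1 ((Finset.ext_iff.1 hsupp _).1 (E i).2)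
      exact ⟨s, fun _ => ⟨hs, hsE⟩⟩
    · exact ⟨0, fun h => absurd h hn⟩
  choose g hg using hlift
  have hval : ∀ i n, N ≤ n → v n (g i n) = v N (E i) := fun i n hn => by
    rw [← (hg i n hn).2, hfold n hn, mapDomain_apply' _ _ subset_rfl (hinj n hn) (hg i n hn).1]
  have hg_inj : ∀ n ≥ N, Function.Injective (g · n) := fun n hn i j hij => by
    apply E.injective
    rw [Subtype.ext_iff, ← (hg i n hn).2, ← (hg j n hn).2]
    exact congrArg (· % c N) hij
  refine ⟨fun i => v N (E i), g, fun i n hn => ⟨(hg i n hn).1, hval i n hn⟩, ?_, hg_inj, ?_⟩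
  · intro i n hn
    have hmem := (hg i (n + 1) (by omega)).1
    refine hinj n hn (mem_coe.2 ?_) (hg i n hn).1 ?_
    · rw [mem_support_iff, hv n hn, mapDomain_apply' _ _ subset_rfl (hinj_succ n hn) hmem]
      exact mem_support_iff.1 hmem
    · simp only [Nat.mod_mod_of_dvd _ (hc hn), (hg i (n + 1) (by omega)).2, (hg i n hn).2]
  · intro n hn
    conv_lhs => rw [eq_sum_single_of_injective (hg_inj n hn) (fun i => (hg i n hn).1)
      (by rw [hcard n hn, Fintype.card_fin])]
    simp only [hval _ n hn]

end Tower

end Finsupp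

namespace Nat

theorem exists_forall_ge_eq_of_le_succ {f : ℕ → ℕ} {n₀ C : ℕ}
    (hf : ∀ n ≥ n₀, f n ≤ f (n + 1)) (hC : ∀ n ≥ n₀, f n ≤ C) :
    ∃ N ≥ n₀, ∀ n ≥ N, f n = f N := by
  have hbdd : BddAbove (f '' Set.Ici n₀) := ⟨C, by rintro _ ⟨n, hn, rfl⟩; exact hC n hn⟩
  obtain ⟨N, hN, hmax⟩ := Nat.sSup_mem (Set.image_nonempty.2 Set.nonempty_Ici) hbdd
  refine ⟨N, hN, fun n hn =>
    le_antisymm ?_ (monotoneOn_nat_Ici_of_le_succ hf hN (hN.trans hn) hn)⟩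
  exact hmax ▸ le_csSup hbdd ⟨n, Set.mem_Ici.2 (hN.trans hn), rfl⟩

theorem div_add_mod_lt {Q a : ℕ} (hQ : 2 ≤ Q) (ha : Q ≤ a) : a / Q + a % Q < a := by
  have hq : 0 < a / Q := Nat.div_pos ha (by omega)
  have := Nat.div_add_mod a Q
  nlinarith

theorem mod_sub_one_eq_div_add_mod_mod (Q a : ℕ) : a % (Q - 1) = (a / Q + a % Q) % (Q - 1) := by
  rcases Q with _ | Q
  · simp
  conv_lhs => rw [← Nat.div_add_mod a (Q + 1), add_mul, one_mul, add_assoc]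
  simp

theorem digits_sum_ne_zero (p : ℕ) {n : ℕ} (hn : n ≠ 0) : (digits p n).sum ≠ 0 := fun h =>
  getLast_digit_ne_zero p hn (List.sum_eq_zero_iff.1 h _ (List.getLast_mem _))

def digitsFinsupp (p n : ℕ) : ℕ →₀ ℕ := (digits p n).toFinsupp

theorem digitsFinsupp_apply {p : ℕ} (hp : 1 < p) (n t : ℕ) :
    digitsFinsupp p n t = n / p ^ t % p :=
  getD_digits n t hp

theorem digitsFinsupp_lt {p : ℕ} (hp : 1 < p) (n t : ℕ) : digitsFinsupp p n t < p :=
  digitsFinsupp_apply hp n t ▸ Nat.mod_lt _ (by omega)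

theorem support_digitsFinsupp_subset {p n K : ℕ} (hp : 1 < p) (hn : n < p ^ K) :
    (digitsFinsupp p n).support ⊆ range K :=
  (List.toFinsupp_support_subset _).trans
    (range_subset_range.2 ((digits_length_le_iff hp n).2 hn))

theorem digitsFinsupp_sum_mul_pow (p n : ℕ) :
    (digitsFinsupp p n).sum (fun i a => a * p ^ i) = n := by
  rw [digitsFinsupp, List.toFinsupp_sum_mul_pow, ofDigits_digits]

theorem digitsFinsupp_sum (p n : ℕ) :
    (digitsFinsupp p n).sum (fun _ a => a) = (digits p n).sum := by
  simpa [digitsFinsupp, ofDigits_one] using List.toFinsupp_sum_mul_pow 1 (digits p n)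

theorem digitsFinsupp_ne_zero {p n : ℕ} (hn : n ≠ 0) : digitsFinsupp p n ≠ 0 := by
  intro h
  apply hn
  rw [← digitsFinsupp_sum_mul_pow p n, h, Finsupp.sum_zero_index]

theorem eq_sum_of_digitsFinsupp_eq {ι : Type*} {p n : ℕ} {s : Finset ι} {θ g : ι → ℕ}
    (h : digitsFinsupp p n = ∑ i ∈ s, Finsupp.single (g i) (θ i)) :
    n = ∑ i ∈ s, θ i * p ^ g i := by
  rw [← digitsFinsupp_sum_mul_pow p n, h, ← Finsupp.sum_finsetSum_index (fun _ => zero_mul _)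
    fun _ _ _ => add_mul _ _ _]
  simp

theorem digits_sum_add_sub_one_mul_sum_div_pow {p n L : ℕ} (hp : 1 < p) (hn : n < p ^ L) :
    (digits p n).sum + (p - 1) * ∑ i ∈ range L, n / p ^ (i + 1) = n := by
  rcases eq_or_ne n 0 with rfl | hn0
  · simp
  have hsum :
      ∑ i ∈ range L, n / p ^ (i + 1) = ∑ i ∈ range (log p n + 1), n / p ^ (i + 1) := by
    refine (sum_subset (range_subset_range.2 (log_lt_of_lt_pow hn0 hn)) fun i _ hi => ?_).symm
    refine div_eq_of_lt ((lt_pow_succ_log_self hp n).trans_le (pow_le_pow_right₀ hp.le ?_))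
    simp only [mem_range, not_lt] at hi
    omega
  rw [hsum, sub_one_mul_sum_log_div_pow_eq_sub_sum_digits]
  have := digit_sum_le p n
  omega

/-- The `i`-th summand counts the carry out of position `i` when adding `x` and `y`. -/
theorem digits_sum_add_add_sub_one_mul_carries {p : ℕ} (hp : 1 < p) (x y : ℕ) :
    (digits p (x + y)).sum + (p - 1) * ∑ i ∈ range (x + y),
      ((x + y) / p ^ (i + 1) - (x / p ^ (i + 1) + y / p ^ (i + 1))) =
    (digits p x).sum + (digits p y).sum := by
  have hL : x + y < p ^ (x + y) := Nat.lt_pow_self hp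
  have hx := digits_sum_add_sub_one_mul_sum_div_pow hp ((le_add_right x y).trans_lt hL)
  have hy := digits_sum_add_sub_one_mul_sum_div_pow hp ((le_add_left y x).trans_lt hL)
  have hxy := digits_sum_add_sub_one_mul_sum_div_pow hp hL
  have hle : ∑ i ∈ range (x + y), (x / p ^ (i + 1) + y / p ^ (i + 1)) ≤
      ∑ i ∈ range (x + y), (x + y) / p ^ (i + 1) :=
    sum_le_sum fun i _ => div_add_div_le_add_div
  rw [sum_tsub_distrib _ fun i _ => div_add_div_le_add_div, Nat.mul_sub]
  rw [sum_add_distrib] at hle ⊢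
  have := Nat.mul_le_mul_left (p - 1) hle
  rw [mul_add] at this ⊢
  omega

theorem digits_sum_add_le {p : ℕ} (hp : 1 < p) (x y : ℕ) :
    (digits p (x + y)).sum ≤ (digits p x).sum + (digits p y).sum :=
  (digits_sum_add_add_sub_one_mul_carries hp x y).symm ▸ le_add_right _ _

theorem digitsFinsupp_add {p x y : ℕ} (hp : 1 < p)
    (h : (digits p (x + y)).sum = (digits p x).sum + (digits p y).sum) :
    digitsFinsupp p (x + y) = digitsFinsupp p x + digitsFinsupp p y := by
  have hcarry := digits_sum_add_add_sub_one_mul_carries hp x y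
  rw [← h, add_eq_left, mul_eq_zero, sum_eq_zero_iff] at hcarry
  have hdiv : ∀ k, (x + y) / p ^ k = x / p ^ k + y / p ^ k := by
    rintro (_ | i)
    · simp
    refine le_antisymm ?_ div_add_div_le_add_div
    rcases lt_or_ge i (x + y) with hi | hi
    · have := hcarry.resolve_left (by omega) i (mem_range.2 hi)
      omega
    · rw [div_eq_of_lt ((Nat.lt_pow_self hp).trans_le (pow_le_pow_right₀ hp.le (by omega)))]
      exact zero_le _
  have hdigit : ∀ z t, z / p ^ t % p + p * (z / p ^ (t + 1)) = z / p ^ t := fun z t => by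
    rw [pow_succ, ← Nat.div_div_eq_div_mul]
    exact mod_add_div _ _
  ext t
  simp only [Finsupp.add_apply, digitsFinsupp_apply hp]
  have hxy := hdigit (x + y) t
  rw [hdiv, hdiv (t + 1), mul_add] at hxy
  rw [hdiv]
  linarith [hdigit x t, hdigit y t]

theorem digitsFinsupp_pow_mul_add {p K q s : ℕ} (hp : 1 < p) (hs : s < p ^ K) :
    digitsFinsupp p (p ^ K * q + s) =
      (digitsFinsupp p q).mapDomain (· + K) + digitsFinsupp p s := by
  ext t
  simp only [Finsupp.add_apply, digitsFinsupp_apply hp]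
  rcases lt_or_ge t K with ht | ht
  · obtain ⟨k, rfl⟩ := Nat.exists_eq_add_of_lt ht
    rw [Finsupp.mapDomain_of_notMem_range _ _ (by rintro ⟨u, hu⟩; simp only at hu; omega),
      show p ^ (t + k + 1) * q = p ^ t * (p * (p ^ k * q)) by ring,
      Nat.mul_add_div (by positivity), Nat.mul_add_mod, zero_add]
  · obtain ⟨u, rfl⟩ := Nat.exists_eq_add_of_le' ht
    rw [Finsupp.mapDomain_apply (add_left_injective K), digitsFinsupp_apply hp,
      show p ^ (u + K) = p ^ K * p ^ u by ring, ← Nat.div_div_eq_div_mul,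
      Nat.mul_add_div (by positivity), Nat.div_eq_of_lt hs, add_zero,
      Nat.div_eq_of_lt (hs.trans_le (Nat.le_mul_of_pos_right _ (by positivity)))]
    simp

theorem digits_sum_pow_mul_add {p K q s : ℕ} (hp : 1 < p) (hs : s < p ^ K) :
    (digits p (p ^ K * q + s)).sum = (digits p q).sum + (digits p s).sum := by
  rw [← digitsFinsupp_sum, digitsFinsupp_pow_mul_add hp hs,
    Finsupp.sum_add_index' (fun _ => rfl) fun _ _ _ => rfl,
    Finsupp.sum_mapDomain_index (fun _ => rfl) fun _ _ _ => rfl, digitsFinsupp_sum,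
    digitsFinsupp_sum]

theorem digits_sum_mod_pow_sub_one_le {p : ℕ} (hp : 1 < p) (K a : ℕ) :
    (digits p (a % (p ^ K - 1))).sum ≤ (digits p a).sum := by
  rcases K.eq_zero_or_pos with rfl | hK
  · simp
  have hQ : 2 ≤ p ^ K := hp.trans_le (Nat.le_self_pow hK.ne' p)
  induction a using Nat.strong_induction_on with
  | _ a ih =>
  rcases lt_or_ge a (p ^ K) with ha | ha
  · rcases lt_or_ge a (p ^ K - 1) with ha' | ha'
    · rw [Nat.mod_eq_of_lt ha']
    · simp [show a = p ^ K - 1 by omega]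
  calc (digits p (a % (p ^ K - 1))).sum
      = (digits p ((a / p ^ K + a % p ^ K) % (p ^ K - 1))).sum := by
        rw [← mod_sub_one_eq_div_add_mod_mod]
    _ ≤ (digits p (a / p ^ K + a % p ^ K)).sum := ih _ (div_add_mod_lt hQ ha)
    _ ≤ (digits p (a / p ^ K)).sum + (digits p (a % p ^ K)).sum := digits_sum_add_le hp _ _
    _ = (digits p a).sum := by
        rw [← digits_sum_pow_mul_add hp (Nat.mod_lt a (by omega)), Nat.div_add_mod]

theorem digitsFinsupp_mod_pow_sub_one {p K a : ℕ} (hp : 1 < p)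
    (h : (digits p (a % (p ^ K - 1))).sum = (digits p a).sum) :
    digitsFinsupp p (a % (p ^ K - 1)) = (digitsFinsupp p a).mapDomain (· % K) := by
  rcases K.eq_zero_or_pos with rfl | hK
  · simp only [pow_zero, Nat.sub_self, Nat.mod_zero]
    exact Finsupp.mapDomain_id.symm
  have hQ : 2 ≤ p ^ K := hp.trans_le (Nat.le_self_pow hK.ne' p)
  induction a using Nat.strong_induction_on with
  | _ a ih =>
  rcases lt_or_ge a (p ^ K) with ha | ha
  · have ha' : a < p ^ K - 1 := by
      by_contra! ha'
      have h0 : a % (p ^ K - 1) = 0 := by rw [show a = p ^ K - 1 by omega, Nat.mod_self]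
      rw [h0, digits_zero, List.sum_nil] at h
      exact digits_sum_ne_zero p (show a ≠ 0 by omega) h.symm
    rw [Nat.mod_eq_of_lt ha', Finsupp.mapDomain_congr (g := id), Finsupp.mapDomain_id]
    exact fun t ht => Nat.mod_eq_of_lt (mem_range.1 (support_digitsFinsupp_subset hp ha ht))
  have hlt := div_add_mod_lt hQ ha
  rw [mod_sub_one_eq_div_add_mod_mod] at h ⊢
  set q := a / p ^ K
  set s := a % p ^ K
  have hs : s < p ^ K := Nat.mod_lt a (by omega)
  have ha_eq : p ^ K * q + s = a := Nat.div_add_mod a (p ^ K)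
  have h₁ := digits_sum_mod_pow_sub_one_le hp K (q + s)
  have h₂ := digits_sum_add_le hp q s
  have h₃ := digits_sum_pow_mul_add (q := q) hp hs
  rw [ha_eq] at h₃
  rw [ih _ hlt (by omega), digitsFinsupp_add hp (by omega), ← ha_eq,
    digitsFinsupp_pow_mul_add hp hs, Finsupp.mapDomain_add, Finsupp.mapDomain_add,
    ← Finsupp.mapDomain_comp]
  congr 2
  funext t
  simp

theorem exists_eventually_digitsFinsupp_fold {p : ℕ} (hp : 1 < p) {a c : ℕ → ℕ}
    {n₀ C : ℕ} (hmod : ∀ n ≥ n₀, a (n + 1) % (p ^ c n - 1) = a n)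
    (hC : ∀ n ≥ n₀, (digits p (a n)).sum ≤ C) :
    ∃ N ≥ n₀,
      (∀ n ≥ N, digitsFinsupp p (a n) = (digitsFinsupp p (a (n + 1))).mapDomain (· % c n)) ∧
      ∀ n ≥ N, #(digitsFinsupp p (a n)).support = #(digitsFinsupp p (a N)).support := by
  obtain ⟨N₁, hN₁, hS⟩ := exists_forall_ge_eq_of_le_succ
    (f := fun n => (digits p (a n)).sum)
    (fun n hn => hmod n hn ▸ digits_sum_mod_pow_sub_one_le hp _ _) hC
  have hfold : ∀ n ≥ N₁,
      digitsFinsupp p (a n) = (digitsFinsupp p (a (n + 1))).mapDomain (· % c n) := by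
    intro n hn
    rw [← hmod n (hN₁.trans hn)]
    exact digitsFinsupp_mod_pow_sub_one hp
      (by rw [hmod n (hN₁.trans hn), hS n hn, hS (n + 1) (by omega)])
  obtain ⟨N, hN, hcard⟩ := exists_forall_ge_eq_of_le_succ
    (f := fun n => #(digitsFinsupp p (a n)).support) (n₀ := N₁)
    (fun n hn => hfold n hn ▸ Finsupp.card_support_mapDomain_le _ _)
    (fun n hn => (Finsupp.card_support_le_sum _).trans
      ((digitsFinsupp_sum p _).trans_le (hC n (hN₁.trans hn))))
  exact ⟨N, hN₁.trans hN, fun n hn => hfold n (hN.trans hn), hcard⟩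

end Nat

/-- If a nontrivial compatible sequence `(m_n)` has bounded base-`p` digit sums, then
eventually `m_n = ∑_{i=1}^l θ_i p^{g_{i,n}}` with fixed digits `0 < θ_i < p` and
positions `g_{i,n} < n!` which are distinct for fixed `n` and compatible modulo
factorials. -/
theorem bounded_digitSum_normal_form (p : ℕ) (hp : p.Prime) (m : ℕ → ℕ)
    (hlt : ∀ n, 1 ≤ n → m n < p ^ (Nat.factorial n) - 1)
    (hcomp : ∀ i j, 1 ≤ i → i < j → m j ≡ m i [MOD p ^ (Nat.factorial i) - 1])
    (hnz : ∃ n, 1 ≤ n ∧ m n ≠ 0)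
    (hbd : ∃ C : ℕ, ∀ n, 1 ≤ n → (Nat.digits p (m n)).sum ≤ C) :
    ∃ N l : ℕ, 1 ≤ N ∧ 1 ≤ l ∧ ∃ θ : Fin l → ℕ, ∃ g : Fin l → ℕ → ℕ,
      (∀ i, 0 < θ i ∧ θ i < p) ∧
      (∀ i, ∀ n, N ≤ n → g i n < (Nat.factorial n)) ∧
      (∀ i, ∀ n, N ≤ n → g i (n + 1) ≡ g i n [MOD (Nat.factorial n)]) ∧
      (∀ i j, i ≠ j → ∀ n, N ≤ n → g i n ≠ g j n) ∧
      (∀ n, N ≤ n → m n = ∑ i, θ i * p ^ g i n) := by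
  obtain ⟨n₀, hn₀, hm₀⟩ := hnz
  obtain ⟨C, hC⟩ := hbd
  have hmod : ∀ n ≥ n₀, m (n + 1) % (p ^ n.factorial - 1) = m n := fun n hn =>
    Eq.trans (hcomp n (n + 1) (hn₀.trans hn) n.lt_succ_self)
      (Nat.mod_eq_of_lt (hlt n (hn₀.trans hn)))
  obtain ⟨N, hN, hfold, hcard⟩ :=
    Nat.exists_eventually_digitsFinsupp_fold hp.one_lt hmod fun n hn => hC n (hn₀.trans hn)
  obtain ⟨θ, g, hg, hg_mod, hg_inj, hsum⟩ :=
    Finsupp.exists_enumeration_of_mapDomain_mod Nat.factorial_dvd_factorial hfold hcard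
  have hmN : m N ≠ 0 := fun h0 => by
    rcases hN.eq_or_lt with rfl | hlt'
    · exact hm₀ h0
    · have := hcomp n₀ N hn₀ hlt'
      rw [h0, Nat.ModEq, Nat.zero_mod, Nat.mod_eq_of_lt (hlt n₀ hn₀)] at this
      exact hm₀ this.symm
  have hg_lt : ∀ i n, N ≤ n → g i n < n.factorial := fun i n hn =>
    mem_range.1 (Nat.support_digitsFinsupp_subset hp.one_lt
      ((hlt n (by omega)).trans_le (Nat.sub_le _ _)) (hg i n hn).1)
  refine ⟨N, _, hn₀.trans hN, card_pos.2 (Finsupp.support_nonempty_iff.2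
    (Nat.digitsFinsupp_ne_zero hmN)), θ, g, fun i => ?_, hg_lt,
    fun i n hn => (hg_mod i n hn).trans (Nat.mod_eq_of_lt (hg_lt i n hn)).symm,
    fun i j hij n hn => (hg_inj n hn).ne hij,
    fun n hn => Nat.eq_sum_of_digitsFinsupp_eq (hsum n hn)⟩
  obtain ⟨hmem, hval⟩ := hg i N le_rfl
  exact hval ▸ ⟨Nat.pos_of_ne_zero (Finsupp.mem_support_iff.1 hmem),
    Nat.digitsFinsupp_lt hp.one_lt _ _⟩
end

section
/- Let p be a prime, r ∈ ℕ*, and m ∈ ℕ with base-p expansion m = ∑_j m_j p^j. Suppose there exists a residue class i_0 modulo r such that ∑_{j ≡ i_0 (mod r)} m_j ≥ p^r − 1. Then there exists m' ∈ ℕ* with m' divisible by p^r − 1 and such that every base-p digit of m' is at most the corresponding base-p digit of m; in particular, C(m, m') is not divisible by p. -/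
/-!
Spread the target `p ^ r - 1` over the digits of `m` in the class `i0`, taking at each
position at most the digit of `m` there, and let `m'` be the number with these digits.
Since `p ^ j ≡ p ^ i0 [MOD p ^ r - 1]` for `j ≡ i0 [MOD r]`, we get
`m' ≡ (p ^ r - 1) * p ^ i0 ≡ 0`, and Lucas' theorem turns the digit-wise bound into
`p ∤ C(m, m')`.
-/

open Finset

theorem Finset.exists_le_sum_eq_of_le_sum {ι : Type*} (w : ι → ℕ) (s : Finset ι) {t : ℕ}
    (ht : t ≤ ∑ j ∈ s, w j) : ∃ c ≤ w, ∑ j ∈ s, c j = t := by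
  classical
  induction s using Finset.induction_on generalizing t with
  | empty => exact ⟨0, fun _ => Nat.zero_le _, by simp_all⟩
  | insert a s ha ih =>
    rw [sum_insert ha] at ht
    obtain ⟨c, hcw, hc⟩ := ih (t := t - min t (w a)) (by omega)
    refine ⟨Function.update c a (min t (w a)), fun j => ?_, ?_⟩
    · rcases eq_or_ne j a with rfl | hj
      · simp
      · simpa [hj] using hcw j
    · rw [sum_insert ha, sum_update_of_notMem ha, hc, Function.update_self]
      omega

theorem Nat.sum_range_mul_pow_div_pow_mod {b : ℕ} {d : ℕ → ℕ} (hd : ∀ j, d j < b)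
    (n k : ℕ) :
    (∑ j ∈ range n, d j * b ^ j) / b ^ k % b = if k < n then d k else 0 := by
  induction n generalizing d k with
  | zero => simp
  | succ n ih =>
    have hb : 0 < b := (Nat.zero_le _).trans_lt (hd 0)
    have hsplit : ∑ j ∈ range (n + 1), d j * b ^ j =
        d 0 + b * ∑ j ∈ range n, d (j + 1) * b ^ j := by
      rw [sum_range_succ', mul_sum]
      simp only [pow_succ', pow_zero, mul_one, mul_left_comm b]
      ac_rfl
    rw [hsplit]
    cases k with
    | zero => simp [Nat.mod_eq_of_lt (hd 0)]
    | succ k =>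
      rw [pow_succ', ← Nat.div_div_eq_div_mul, Nat.add_mul_div_left _ _ hb,
        Nat.div_eq_of_lt (hd 0), zero_add, ih (fun j => hd (j + 1))]
      simp

theorem Nat.pow_modEq_pow_mod_s15 {a : ℕ} (ha : 0 < a) (r j : ℕ) :
    a ^ j ≡ a ^ (j % r) [MOD a ^ r - 1] := by
  have hr : a ^ r ≡ 1 [MOD a ^ r - 1] := Nat.modEq_sub (Nat.one_le_pow _ _ ha)
  calc a ^ j = (a ^ r) ^ (j / r) * a ^ (j % r) := by
        rw [← pow_mul, ← pow_add, Nat.div_add_mod]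
    _ ≡ 1 ^ (j / r) * a ^ (j % r) [MOD a ^ r - 1] := (hr.pow _).mul_right _
    _ = a ^ (j % r) := by rw [one_pow, one_mul]

theorem Nat.sum_mul_pow_modEq_of_mod_eq {a r i : ℕ} (ha : 0 < a) {s : Finset ℕ}
    {c : ℕ → ℕ} (hc : ∀ j ∈ s, c j ≠ 0 → j % r = i) :
    ∑ j ∈ s, c j * a ^ j ≡ (∑ j ∈ s, c j) * a ^ i [MOD a ^ r - 1] := by
  rw [sum_mul]
  refine Nat.ModEq.sum fun j hj => ?_
  by_cases hcj : c j = 0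
  · simp [hcj, Nat.ModEq.refl]
  · exact hc j hj hcj ▸ (Nat.pow_modEq_pow_mod_s15 ha r j).mul_left _

theorem Nat.Prime.not_dvd_choose_of_lt {p a b : ℕ} (hp : p.Prime) (hba : b ≤ a)
    (hap : a < p) :
    ¬ p ∣ choose a b := fun h => by
  have : p ∣ a.factorial :=
    Nat.choose_mul_factorial_mul_factorial hba ▸ (h.mul_right _).mul_right _
  exact absurd (hp.dvd_factorial.1 this) (not_le.2 hap)

theorem Nat.Prime.not_dvd_choose_of_digits_le {p n k : ℕ} (hp : p.Prime)
    (h : ∀ i, k / p ^ i % p ≤ n / p ^ i % p) : ¬ p ∣ choose n k := by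
  have := Fact.mk hp
  have hlt : ∀ x ≤ n + k, x < p ^ (n + k) := fun x hx =>
    (Nat.lt_pow_self hp.one_lt).trans_le (Nat.pow_le_pow_right hp.pos hx)
  rw [(Choose.lucas_theorem_nat (hlt n (by omega)) (hlt k (by omega))).dvd_iff dvd_rfl,
    hp.prime.dvd_finsetProd_iff]
  rintro ⟨i, -, hi⟩
  exact hp.not_dvd_choose_of_lt (h i) (Nat.mod_lt _ hp.pos) hi

/-- If for some residue class `i0` mod `r` the base-`p` digits of `m` at positions
congruent to `i0` sum to at least `p^r - 1`, then there is `m' ≥ 1` divisible by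
`p^r - 1` whose base-`p` digits are bounded digit-wise by those of `m`; in particular
`p ∤ C(m, m')`. -/
theorem exists_dvd_digitwise_le (p r m : ℕ) (hp : p.Prime) (hr : 1 ≤ r)
    (h : ∃ i0 < r, p ^ r - 1 ≤
      ∑ j ∈ Finset.range (m + 1), if j % r = i0 then m / p ^ j % p else 0) :
    ∃ m', 0 < m' ∧ (p ^ r - 1) ∣ m' ∧
      (∀ j, m' / p ^ j % p ≤ m / p ^ j % p) ∧ ¬ p ∣ Nat.choose m m' := by
  obtain ⟨i0, -, hsum⟩ := h
  obtain ⟨c, hcw, hc⟩ := exists_le_sum_eq_of_le_sum _ _ hsum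
  have hc_digit : ∀ j, c j ≤ m / p ^ j % p := fun j =>
    (hcw j).trans (by dsimp only; split_ifs <;> simp)
  have hc_class : ∀ j, c j ≠ 0 → j % r = i0 := fun j hj =>
    by_contra fun hji => hj (Nat.le_zero.1 ((hcw j).trans_eq (if_neg hji)))
  set m' := ∑ j ∈ range (m + 1), c j * p ^ j
  have hdigits : ∀ j, m' / p ^ j % p ≤ m / p ^ j % p := fun j => by
    rw [Nat.sum_range_mul_pow_div_pow_mod (fun j => (hc_digit j).trans_lt (Nat.mod_lt _ hp.pos))]
    split_ifs
    exacts [hc_digit j, Nat.zero_le _]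
  have hN : 0 < p ^ r - 1 := Nat.sub_pos_of_lt (Nat.one_lt_pow (by omega) hp.one_lt)
  refine ⟨m', ?_, ?_, hdigits, hp.not_dvd_choose_of_digits_le hdigits⟩
  · calc 0 < ∑ j ∈ range (m + 1), c j := hc ▸ hN
      _ ≤ m' := sum_le_sum fun j _ => Nat.le_mul_of_pos_right _ (pow_pos hp.pos j)
  · rw [← Nat.modEq_zero_iff_dvd]
    calc m' ≡ (∑ j ∈ range (m + 1), c j) * p ^ i0 [MOD p ^ r - 1] :=
          Nat.sum_mul_pow_modEq_of_mod_eq hp.pos fun j _ => hc_class j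
      _ = (p ^ r - 1) * p ^ i0 := by rw [hc]
      _ ≡ 0 [MOD p ^ r - 1] := Nat.modEq_zero_iff_dvd.2 (dvd_mul_right _ _)
end

section
/- Let p be a prime and suppose m, m' ∈ ℕ satisfy: m' ≡ m (mod p^r − 1) for some r > 1, 0 ≤ m ≤ p^r − 1, and the base-p digit sums satisfy f(m') = f(m). Then the number of nonzero base-p digits of m' is at least the number of nonzero base-p digits of m. -/
variable {p : ℕ}

lemma recS (hp : 2 ≤ p) (n : ℕ) :
    (Nat.digits p n).sum = n % p + (Nat.digits p (n / p)).sum := by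
  rcases Nat.eq_zero_or_pos n with h | h
  · simp [h]
  · rw [Nat.digits_def' hp h, List.sum_cons]

lemma recC (hp : 2 ≤ p) (n : ℕ) :
    ((Nat.digits p n).filter (· ≠ 0)).length =
      (if n % p = 0 then 0 else 1) + ((Nat.digits p (n / p)).filter (· ≠ 0)).length := by
  rcases Nat.eq_zero_or_pos n with h | h
  · simp [h]
  · rw [Nat.digits_def' hp h, List.filter_cons]
    split <;> simp_all
    omega

lemma splitS (hp : 2 ≤ p) :
    ∀ r s q : ℕ, s < p ^ r →
      (Nat.digits p (s + p ^ r * q)).sum = (Nat.digits p s).sum + (Nat.digits p q).sum := by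
  intro r
  induction r with
  | zero =>
    intro s q hs
    have : s = 0 := by simpa using hs
    subst this
    simp
  | succ r ih =>
    intro s q hs
    have hp0 : 0 < p := by omega
    have key : s + p ^ (r+1) * q = s + p * (p ^ r * q) := by ring
    have hmod : (s + p ^ (r+1) * q) % p = s % p := by
      rw [key, Nat.add_mul_mod_self_left]
    have hdiv : (s + p ^ (r+1) * q) / p = s / p + p ^ r * q := by
      rw [key, Nat.add_mul_div_left _ _ hp0]
    have hslt : s / p < p ^ r := by
      rw [Nat.div_lt_iff_lt_mul hp0]
      calc s < p ^ (r+1) := hs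
      _ = p ^ r * p := by ring
    rw [recS hp (s + p ^ (r+1) * q), hmod, hdiv, ih _ q hslt, recS hp s]
    omega

lemma splitC (hp : 2 ≤ p) :
    ∀ r s q : ℕ, s < p ^ r →
      ((Nat.digits p (s + p ^ r * q)).filter (· ≠ 0)).length =
        ((Nat.digits p s).filter (· ≠ 0)).length +
          ((Nat.digits p q).filter (· ≠ 0)).length := by
  intro r
  induction r with
  | zero =>
    intro s q hs
    have : s = 0 := by simpa using hs
    subst this
    simp
  | succ r ih =>
    intro s q hs
    have hp0 : 0 < p := by omega
    have key : s + p ^ (r+1) * q = s + p * (p ^ r * q) := by ring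
    have hmod : (s + p ^ (r+1) * q) % p = s % p := by
      rw [key, Nat.add_mul_mod_self_left]
    have hdiv : (s + p ^ (r+1) * q) / p = s / p + p ^ r * q := by
      rw [key, Nat.add_mul_div_left _ _ hp0]
    have hslt : s / p < p ^ r := by
      rw [Nat.div_lt_iff_lt_mul hp0]
      calc s < p ^ (r+1) := hs
      _ = p ^ r * p := by ring
    rw [recC hp (s + p ^ (r+1) * q), hmod, hdiv, ih _ q hslt, recC hp s]
    omega

lemma sumZero (hp : 2 ≤ p) : ∀ n : ℕ, (Nat.digits p n).sum = 0 → n = 0 := by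
  intro n
  induction n using Nat.strong_induction_on with
  | _ n ih =>
    intro h
    by_contra hn
    rw [recS hp n] at h
    have h1 : n % p = 0 := by omega
    have h2 : (Nat.digits p (n / p)).sum = 0 := by omega
    have h3 : n / p < n := Nat.div_lt_self (by omega) (by omega)
    have := ih _ h3 h2
    have := Nat.div_add_mod n p
    rw [this.symm] at hn
    simp_all

lemma subaddS (hp : 2 ≤ p) :
    ∀ N a b c, a + b ≤ N → c ≤ 1 →
      (Nat.digits p (a + b + c)).sum ≤ (Nat.digits p a).sum + (Nat.digits p b).sum + c := by
  intro N
  induction N with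
  | zero =>
    intro a b c hab hc
    interval_cases c <;> simp_all
    simp [Nat.mod_eq_of_lt (by omega : 1 < p), Nat.div_eq_of_lt (by omega : 1 < p)]
  | succ N ih =>
    intro a b c hab hc
    rcases Nat.eq_zero_or_pos (a + b) with h0 | h0
    · have ha : a = 0 := by omega
      have hb : b = 0 := by omega
      subst ha hb
      interval_cases c <;> simp_all
      simp [Nat.mod_eq_of_lt (by omega : 1 < p), Nat.div_eq_of_lt (by omega : 1 < p)]
    · have hp0 : 0 < p := by omega
      have hIH : a / p + b / p ≤ N := by
        have h1 : a / p ≤ a := Nat.div_le_self a p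
        have h2 : b / p ≤ b := Nat.div_le_self b p
        rcases Nat.eq_zero_or_pos a with ha | ha
        · have : 0 < b := by omega
          have := Nat.div_lt_self this (by omega : 1 < p)
          omega
        · have := Nat.div_lt_self ha (by omega : 1 < p)
          omega
      have hA := Nat.div_add_mod a p
      have hB := Nat.div_add_mod b p
      have ha0 : a % p < p := Nat.mod_lt a hp0
      have hb0 : b % p < p := Nat.mod_lt b hp0
      rcases lt_or_ge (a % p + b % p + c) p with hlt | hge
      · have key : a + b + c = p * (a / p + b / p) + (a % p + b % p + c) := by
          rw [Nat.mul_add]; omega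
        have hmod : (a + b + c) % p = a % p + b % p + c := by
          rw [key, Nat.mul_add_mod, Nat.mod_eq_of_lt hlt]
        have hdiv : (a + b + c) / p = a / p + b / p := by
          rw [key, Nat.mul_add_div hp0, Nat.div_eq_of_lt hlt, Nat.add_zero]
        rw [recS hp (a+b+c), hmod, hdiv, recS hp a, recS hp b]
        have := ih (a/p) (b/p) 0 hIH (by omega)
        simp at this
        omega
      · set e := a % p + b % p + c - p with he
        have hep : a % p + b % p + c = p + e := by omega
        have helt : e < p := by omega
        have key : a + b + c = p * (a / p + b / p + 1) + e := by
          rw [Nat.mul_add, Nat.mul_add, Nat.mul_one]; omega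
        have hmod : (a + b + c) % p = e := by
          rw [key, Nat.mul_add_mod, Nat.mod_eq_of_lt helt]
        have hdiv : (a + b + c) / p = a / p + b / p + 1 := by
          rw [key, Nat.mul_add_div hp0, Nat.div_eq_of_lt helt, Nat.add_zero]
        rw [recS hp (a+b+c), hmod, hdiv, recS hp a, recS hp b]
        have := ih (a/p) (b/p) 1 hIH (le_refl 1)
        omega

lemma subaddC (hp : 2 ≤ p) :
    ∀ N a b c, a + b ≤ N → c ≤ 1 →
      ((Nat.digits p (a + b + c)).filter (· ≠ 0)).length ≤
        ((Nat.digits p a).filter (· ≠ 0)).length +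
          ((Nat.digits p b).filter (· ≠ 0)).length + c := by
  intro N
  induction N with
  | zero =>
    intro a b c hab hc
    interval_cases c <;> simp_all
    simp [Nat.mod_eq_of_lt (by omega : 1 < p), Nat.div_eq_of_lt (by omega : 1 < p)]
  | succ N ih =>
    intro a b c hab hc
    rcases Nat.eq_zero_or_pos (a + b) with h0 | h0
    · have ha : a = 0 := by omega
      have hb : b = 0 := by omega
      subst ha hb
      interval_cases c <;> simp_all
      simp [Nat.mod_eq_of_lt (by omega : 1 < p), Nat.div_eq_of_lt (by omega : 1 < p)]
    · have hp0 : 0 < p := by omega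
      have hIH : a / p + b / p ≤ N := by
        have h1 : a / p ≤ a := Nat.div_le_self a p
        have h2 : b / p ≤ b := Nat.div_le_self b p
        rcases Nat.eq_zero_or_pos a with ha | ha
        · have : 0 < b := by omega
          have := Nat.div_lt_self this (by omega : 1 < p)
          omega
        · have := Nat.div_lt_self ha (by omega : 1 < p)
          omega
      have hA := Nat.div_add_mod a p
      have hB := Nat.div_add_mod b p
      have ha0 : a % p < p := Nat.mod_lt a hp0
      have hb0 : b % p < p := Nat.mod_lt b hp0
      rcases lt_or_ge (a % p + b % p + c) p with hlt | hge
      · have key : a + b + c = p * (a / p + b / p) + (a % p + b % p + c) := by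
          rw [Nat.mul_add]; omega
        have hmod : (a + b + c) % p = a % p + b % p + c := by
          rw [key, Nat.mul_add_mod, Nat.mod_eq_of_lt hlt]
        have hdiv : (a + b + c) / p = a / p + b / p := by
          rw [key, Nat.mul_add_div hp0, Nat.div_eq_of_lt hlt, Nat.add_zero]
        rw [recC hp (a+b+c), hmod, hdiv, recC hp a, recC hp b]
        have := ih (a/p) (b/p) 0 hIH (by omega)
        simp only [Nat.add_zero] at this
        split <;> split <;> split <;> omega
      · set e := a % p + b % p + c - p with he
        have hep : a % p + b % p + c = p + e := by omega
        have helt : e < p := by omega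
        have key : a + b + c = p * (a / p + b / p + 1) + e := by
          rw [Nat.mul_add, Nat.mul_add, Nat.mul_one]; omega
        have hmod : (a + b + c) % p = e := by
          rw [key, Nat.mul_add_mod, Nat.mod_eq_of_lt helt]
        have hdiv : (a + b + c) / p = a / p + b / p + 1 := by
          rw [key, Nat.mul_add_div hp0, Nat.div_eq_of_lt helt, Nat.add_zero]
        rw [recC hp (a+b+c), hmod, hdiv, recC hp a, recC hp b]
        have := ih (a/p) (b/p) 1 hIH (le_refl 1)
        split <;> split <;> split <;> omega

lemma lemA {p r m : ℕ} (hp : 2 ≤ p) (hP : 4 ≤ p ^ r) (hm : m ≤ p ^ r - 1) :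
    ∀ m', m' ≠ 0 → m' % (p ^ r - 1) = m % (p ^ r - 1) →
      (Nat.digits p m).sum ≤ (Nat.digits p m').sum := by
  intro m'
  induction m' using Nat.strong_induction_on with
  | _ m' ih =>
    intro hne hmod
    set P := p ^ r with hPdef
    set K := P - 1 with hKdef
    have hK3 : 3 ≤ K := by omega
    rcases lt_or_ge m' P with hlt | hge
    · -- base case
      rcases eq_or_lt_of_le hm with hmK | hmK
      · rw [hmK, Nat.mod_self] at hmod
        rcases eq_or_lt_of_le (show m' ≤ K by omega) with h1 | h1
        · rw [h1, hmK]
        · rw [Nat.mod_eq_of_lt h1] at hmod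
          omega
      · rw [Nat.mod_eq_of_lt hmK] at hmod
        rcases eq_or_lt_of_le (show m' ≤ K by omega) with h1 | h1
        · rw [← h1, Nat.mod_self] at hmod
          have : m = 0 := hmod.symm
          simp [this]
        · rw [Nat.mod_eq_of_lt h1] at hmod
          rw [hmod]
    · -- fold step
      have hP0 : 0 < P := by omega
      have hPq := Nat.div_add_mod m' P
      set q := m' / P with hqdef
      set s := m' % P with hsdef
      have hsP : s < P := Nat.mod_lt m' hP0
      have hq1 : 1 ≤ q := (Nat.one_le_div_iff hP0).2 hge
      set n := q + s with hndef
      have hnm : n < m' := by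
        have h1 : 1 * q < P * q := Nat.mul_lt_mul_of_lt_of_le (by omega) (le_refl q) (by omega)
        omega
      have hnne : n ≠ 0 := by omega
      have hPK : P = K + 1 := by omega
      have hmK2 : m' = n + q * K := by
        rw [← hPq, hndef, hPK]; ring
      have hcong : n % K = m % K := by
        rw [← hmod, hmK2, Nat.add_mul_mod_self_right]
      have hsplit : (Nat.digits p m').sum = (Nat.digits p s).sum + (Nat.digits p q).sum := by
        have h2 : m' = s + P * q := by rw [← hPq]; ring
        rw [h2]
        exact splitS hp r s q hsP
      have hsub : (Nat.digits p n).sum ≤ (Nat.digits p q).sum + (Nat.digits p s).sum := by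
        have := subaddS hp (q + s) q s 0 (le_refl _) (by omega)
        simpa using this
      have := ih n hnm hnne hcong
      omega

lemma lemB {p r m : ℕ} (hp : 2 ≤ p) (hP : 4 ≤ p ^ r) (hm : m ≤ p ^ r - 1) :
    ∀ m', m' % (p ^ r - 1) = m % (p ^ r - 1) →
      (Nat.digits p m').sum = (Nat.digits p m).sum →
      ((Nat.digits p m).filter (· ≠ 0)).length ≤
        ((Nat.digits p m').filter (· ≠ 0)).length := by
  intro m'
  induction m' using Nat.strong_induction_on with
  | _ m' ih =>
    intro hmod hf
    set P := p ^ r with hPdef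
    set K := P - 1 with hKdef
    have hK3 : 3 ≤ K := by omega
    rcases lt_or_ge m' P with hlt | hge
    · -- base case
      rcases eq_or_lt_of_le hm with hmK | hmK
      · rw [hmK, Nat.mod_self] at hmod
        rcases eq_or_lt_of_le (show m' ≤ K by omega) with h1 | h1
        · rw [h1, hmK]
        · rw [Nat.mod_eq_of_lt h1] at hmod
          subst hmod
          simp at hf
          have := sumZero hp m hf.symm
          omega
      · rw [Nat.mod_eq_of_lt hmK] at hmod
        rcases eq_or_lt_of_le (show m' ≤ K by omega) with h1 | h1
        · rw [← h1, Nat.mod_self] at hmod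
          have : m = 0 := hmod.symm
          simp [this]
        · rw [Nat.mod_eq_of_lt h1] at hmod
          rw [hmod]
    · -- fold step
      have hP0 : 0 < P := by omega
      have hPq := Nat.div_add_mod m' P
      set q := m' / P with hqdef
      set s := m' % P with hsdef
      have hsP : s < P := Nat.mod_lt m' hP0
      have hq1 : 1 ≤ q := (Nat.one_le_div_iff hP0).2 hge
      set n := q + s with hndef
      have hnm : n < m' := by
        have h1 : 1 * q < P * q := Nat.mul_lt_mul_of_lt_of_le (by omega) (le_refl q) (by omega)
        omega
      have hnne : n ≠ 0 := by omega
      have hPK : P = K + 1 := by omega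
      have hmK2 : m' = n + q * K := by
        rw [← hPq, hndef, hPK]; ring
      have hcong : n % K = m % K := by
        rw [← hmod, hmK2, Nat.add_mul_mod_self_right]
      have h2 : m' = s + P * q := by rw [← hPq]; ring
      have hsplitS : (Nat.digits p m').sum = (Nat.digits p s).sum + (Nat.digits p q).sum := by
        rw [h2]; exact splitS hp r s q hsP
      have hsplitC : ((Nat.digits p m').filter (· ≠ 0)).length =
          ((Nat.digits p s).filter (· ≠ 0)).length +
            ((Nat.digits p q).filter (· ≠ 0)).length := by
        rw [h2]; exact splitC hp r s q hsP
      have hsubS : (Nat.digits p n).sum ≤ (Nat.digits p q).sum + (Nat.digits p s).sum := by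
        have := subaddS hp (q + s) q s 0 (le_refl _) (by omega)
        simpa using this
      have hsubC : ((Nat.digits p n).filter (· ≠ 0)).length ≤
          ((Nat.digits p q).filter (· ≠ 0)).length +
            ((Nat.digits p s).filter (· ≠ 0)).length := by
        have := subaddC hp (q + s) q s 0 (le_refl _) (by omega)
        simpa using this
      have hA := lemA hp hP hm n hnne hcong
      have hfn : (Nat.digits p n).sum = (Nat.digits p m).sum := by omega
      have := ih n hnm hcong hfn
      omega

/-- If `m' ≡ m (mod p^r - 1)` with `0 ≤ m ≤ p^r - 1` and the base-`p` digit sums agree,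
then `m'` has at least as many nonzero base-`p` digits as `m`. -/
theorem nonzero_digits_ge (p r m m' : ℕ) (hp : p.Prime) (hr : 1 < r)
    (hm : m ≤ p ^ r - 1) (hmod : m' ≡ m [MOD p ^ r - 1])
    (hf : (Nat.digits p m').sum = (Nat.digits p m).sum) :
    ((Nat.digits p m).filter (· ≠ 0)).length ≤
      ((Nat.digits p m').filter (· ≠ 0)).length := by
  have hp2 : 2 ≤ p := hp.two_le
  have hP : 4 ≤ p ^ r := by
    calc (4 : ℕ) = 2 ^ 2 := by norm_num
    _ ≤ p ^ 2 := Nat.pow_le_pow_left hp2 2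
    _ ≤ p ^ r := Nat.pow_le_pow_right (by omega) hr
  exact lemB hp2 hP hm m' hmod hf
end

section
/- The group of all (abstract) characters from the multiplicative group of the algebraic closure of F_p to itself (equivalently, to any algebraically closed field of characteristic p containing it) is isomorphic, as an abelian group, to the inverse limit of the system ℤ/(p^{n!} − 1)ℤ with transition maps given by reduction (using that (p^{m!} − 1) | (p^{n!} − 1) for m ≤ n). -/
/-!
Every `t ∈ k^*` has finite order `d` prime to `p`, and `d ∣ p^{d!} - 1` (Euler gives
`d ∣ p^{φ(d)} - 1`, and `φ(d) ∣ d!`). So `k^*` is the increasing union of the cyclic groups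
`μ_{p^{n!}-1}`, and an endomorphism of `k^*` is a compatible family of endomorphisms of these
cyclic groups, i.e. of power maps `t ↦ t^{m_n}` with `m_n ∈ ℤ/(p^{n!}-1)`. Conversely a
compatible family `(m_n)` defines the character `t ↦ t^{m_n}`, for any `n` with `t ∈ μ_{p^{n!}-1}`.
-/

theorem pow_factorial_sub_one_dvd (p : ℕ) {m n : ℕ} (h : m ≤ n) :
    p ^ (Nat.factorial m) - 1 ∣ p ^ (Nat.factorial n) - 1 := by
  obtain ⟨k, hk⟩ := Nat.factorial_dvd_factorial h
  have := Nat.sub_dvd_pow_sub_pow (p ^ (Nat.factorial m)) 1 k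
  rwa [one_pow, ← pow_mul, ← hk] at this

def invLimitZMod (p : ℕ) : AddSubgroup (∀ n : ℕ, ZMod (p ^ (Nat.factorial n) - 1)) where
  carrier := {x | ∀ m n : ℕ, (h : m ≤ n) →
    ZMod.castHom (pow_factorial_sub_one_dvd p h) (ZMod (p ^ (Nat.factorial m) - 1)) (x n) = x m}
  add_mem' := by
    intro a b ha hb m n h
    simp only [Pi.add_apply, map_add, ha m n h, hb m n h]
  zero_mem' := by
    intro m n h
    simp
  neg_mem' := by
    intro a ha m n h
    simp only [Pi.neg_apply, map_neg, ha m n h]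

theorem Nat.dvd_pow_factorial_sub_one {d p : ℕ} (h : d.Coprime p) :
    d ∣ p ^ d.factorial - 1 := by
  rcases d.eq_zero_or_pos with rfl | hd
  · simp [(Nat.coprime_zero_left p).mp h]
  · have h_totient : d ∣ p ^ d.totient - 1 :=
      Nat.dvd_of_mod_eq_zero (Nat.sub_mod_eq_zero_of_mod_eq (Nat.ModEq.pow_totient h.symm))
    exact h_totient.trans <| Nat.pow_sub_one_dvd_pow_sub_one p <|
      Nat.dvd_factorial (Nat.totient_pos.mpr hd) (Nat.totient_le d)

instance (p n : ℕ) [Fact (1 < p)] : NeZero (p ^ n.factorial - 1) :=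
  ⟨(Nat.sub_pos_of_lt (Nat.one_lt_pow (Nat.factorial_ne_zero n) Fact.out)).ne'⟩

section Monoid

variable {G : Type*} [Monoid G] {p : ℕ} {t : G}

theorem pow_pow_factorial_orderOf_sub_one (h : (orderOf t).Coprime p) :
    t ^ (p ^ (orderOf t).factorial - 1) = 1 :=
  orderOf_dvd_iff_pow_eq_one.mp (Nat.dvd_pow_factorial_sub_one h)

theorem pow_pow_factorial_sub_one_of_le {m n : ℕ} (hmn : m ≤ n)
    (ht : t ^ (p ^ m.factorial - 1) = 1) : t ^ (p ^ n.factorial - 1) = 1 :=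
  orderOf_dvd_iff_pow_eq_one.mp
    ((orderOf_dvd_of_pow_eq_one ht).trans (pow_factorial_sub_one_dvd p hmn))

end Monoid

theorem pow_val_intCast {G : Type*} [Group G] {t : G} {q : ℕ} [NeZero q] (ht : t ^ q = 1)
    (k : ℤ) : t ^ (k : ZMod q).val = t ^ k := by
  rw [← zpow_natCast, ZMod.val_intCast, zpow_eq_zpow_iff_modEq]
  exact (Int.mod_modEq k q).of_dvd <|
    Int.natCast_dvd_natCast.mpr (orderOf_dvd_of_pow_eq_one ht)

theorem MonoidHom.exists_zpow_of_pow_eq_one {R : Type*} [CommRing R] [IsDomain R]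
    (σ : Rˣ →* Rˣ) (k : ℕ) [NeZero k] : ∃ m : ℤ, ∀ t : Rˣ, t ^ k = 1 → σ t = t ^ m := by
  let τ : rootsOfUnity k R →* rootsOfUnity k R :=
    (σ.comp (rootsOfUnity k R).subtype).codRestrict _ fun t => by
      change σ t ^ k = 1
      rw [← map_pow, (mem_rootsOfUnity k _).mp t.2, map_one]
  obtain ⟨m, hm⟩ := τ.map_cyclic
  exact ⟨m, fun t ht => congrArg Subtype.val (hm ⟨t, (mem_rootsOfUnity k t).mpr ht⟩)⟩

theorem orderOf_coprime_of_charP {R : Type*} [CommRing R] [IsDomain R] (p : ℕ) [Fact p.Prime]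
    [CharP R p] {t : Rˣ} (ht : IsOfFinOrder t) : (orderOf t).Coprime p := by
  have : NeZero (orderOf t) := ⟨ht.orderOf_pos.ne'⟩
  have hroot : IsPrimitiveRoot (t : R) (orderOf t) := by
    simpa [orderOf_units] using IsPrimitiveRoot.orderOf (t : R)
  rw [Nat.coprime_comm, Nat.Prime.coprime_iff_not_dvd Fact.out, ← CharP.cast_eq_zero_iff R p]
  exact hroot.neZero'.out

theorem isOfFinOrder_of_isIntegral {F L : Type*} [CommRing F] [Finite F] [CommRing L]
    [Algebra F L] {t : Lˣ} (ht : IsIntegral F (t : L)) : IsOfFinOrder t := by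
  have : Module.Finite F (Algebra.adjoin F {(t : L)}) :=
    Algebra.finite_adjoin_simple_of_isIntegral ht
  have : Finite (Algebra.adjoin F {(t : L)}) := Module.finite_of_finite F
  refine finite_powers.mp <| Set.Finite.subset
    ((Set.toFinite (Algebra.adjoin F {(t : L)} : Set L)).preimage Units.val_injective.injOn) ?_
  rintro _ ⟨n, rfl⟩
  simpa using pow_mem (Algebra.self_mem_adjoin_singleton F (t : L)) n

theorem exists_isPrimitiveRoot_pow_factorial_sub_one (K : Type*) [Field K] [IsAlgClosed K]
    (p : ℕ) [Fact (1 < p)] [CharP K p] (n : ℕ) :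
    ∃ u : Kˣ, IsPrimitiveRoot u (p ^ n.factorial - 1) := by
  have : NeZero ((p ^ n.factorial - 1 : ℕ) : K) := ⟨by
    rw [Nat.cast_sub (Nat.one_le_pow _ _ (Nat.zero_lt_of_lt (Fact.out : 1 < p))), Nat.cast_pow,
      CharP.cast_eq_zero, zero_pow (Nat.factorial_ne_zero n), zero_sub, Nat.cast_one, neg_ne_zero]
    exact one_ne_zero⟩
  obtain ⟨ζ, hζ⟩ := HasEnoughRootsOfUnity.exists_primitiveRoot K (p ^ n.factorial - 1)
  exact ⟨_, hζ.isUnit_unit NeZero.out⟩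

namespace invLimitZMod

variable {p : ℕ} [Fact (1 < p)]

section CommMonoid

variable {G : Type*}

theorem pow_val_eq_of_le [Monoid G] (x : invLimitZMod p) {t : G} {m n : ℕ} (hmn : m ≤ n)
    (ht : t ^ (p ^ m.factorial - 1) = 1) : t ^ (x.1 n).val = t ^ (x.1 m).val := by
  refine pow_eq_pow_of_modEq ?_ ht
  rw [← ZMod.natCast_eq_natCast_iff, ZMod.natCast_val, ZMod.natCast_val, ZMod.cast_id', id,
    ← x.2 m n hmn, ZMod.castHom_apply]

theorem pow_val_eq [Monoid G] (x : invLimitZMod p) {t : G} {m n : ℕ}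
    (hm : t ^ (p ^ m.factorial - 1) = 1) (hn : t ^ (p ^ n.factorial - 1) = 1) :
    t ^ (x.1 m).val = t ^ (x.1 n).val := by
  rw [← pow_val_eq_of_le x (le_max_left m n) hm, ← pow_val_eq_of_le x (le_max_right m n) hn]

variable [CommMonoid G]

/-- The exponent is read at `n = orderOf t`; by `pow_val_eq`, any `n` with
`t ^ (p ^ n.factorial - 1) = 1` gives the same power. -/
noncomputable def powMonoidHom (hG : ∀ t : G, (orderOf t).Coprime p) (x : invLimitZMod p) :
    G →* G where
  toFun t := t ^ (x.1 (orderOf t)).val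
  map_one' := one_pow _
  map_mul' s t := by
    set N := orderOf s + orderOf t + orderOf (s * t)
    have read_at_N : ∀ u : G, orderOf u ≤ N → u ^ (x.1 (orderOf u)).val = u ^ (x.1 N).val :=
      fun u hu => (pow_val_eq_of_le x hu (pow_pow_factorial_orderOf_sub_one (hG u))).symm
    rw [read_at_N s (by omega), read_at_N t (by omega), read_at_N (s * t) (by omega), mul_pow]

theorem powMonoidHom_apply_of_pow_eq_one (hG : ∀ t : G, (orderOf t).Coprime p)
    (x : invLimitZMod p) {t : G} {n : ℕ} (ht : t ^ (p ^ n.factorial - 1) = 1) :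
    powMonoidHom hG x t = t ^ (x.1 n).val :=
  pow_val_eq x (pow_pow_factorial_orderOf_sub_one (hG t)) ht

noncomputable def powAddHom (hG : ∀ t : G, (orderOf t).Coprime p) :
    invLimitZMod p →+ Additive (G →* G) where
  toFun x := Additive.ofMul (powMonoidHom hG x)
  map_zero' := congrArg Additive.ofMul <| MonoidHom.ext fun t => by
    simp [powMonoidHom]
  map_add' x y := congrArg Additive.ofMul <| MonoidHom.ext fun t => by
    have ht := pow_pow_factorial_orderOf_sub_one (hG t)
    change t ^ (x.1 _ + y.1 _).val = t ^ (x.1 _).val * t ^ (y.1 _).val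
    rw [ZMod.val_add, pow_eq_pow_of_modEq (Nat.mod_modEq _ _) ht, pow_add]

end CommMonoid

variable {K : Type*} [Field K] [IsAlgClosed K] [CharP K p]

theorem powAddHom_injective (hG : ∀ t : Kˣ, (orderOf t).Coprime p) :
    Function.Injective (powAddHom hG) := by
  refine (injective_iff_map_eq_zero _).mpr fun x hx => Subtype.ext (funext fun n => ?_)
  obtain ⟨u, hu⟩ := exists_isPrimitiveRoot_pow_factorial_sub_one K p n
  have hxu : u ^ (x.1 n).val = 1 := by
    rw [← powMonoidHom_apply_of_pow_eq_one hG x hu.pow_eq_one]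
    exact DFunLike.congr_fun (congrArg Additive.toMul hx) u
  change x.1 n = 0
  rw [← ZMod.natCast_zmod_val (x.1 n), ZMod.natCast_eq_zero_iff]
  exact (hu.pow_eq_one_iff_dvd _).mp hxu

theorem powAddHom_surjective (hG : ∀ t : Kˣ, (orderOf t).Coprime p) :
    Function.Surjective (powAddHom hG) := by
  refine Additive.ofMul.surjective.forall.mpr fun σ => ?_
  choose m hm using fun n : ℕ => σ.exists_zpow_of_pow_eq_one (p ^ n.factorial - 1)
  choose u hu using exists_isPrimitiveRoot_pow_factorial_sub_one K p
  have hx : (fun n : ℕ => (m n : ZMod (p ^ n.factorial - 1))) ∈ invLimitZMod p := by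
    intro a b hab
    rw [map_intCast, ZMod.intCast_eq_intCast_iff, (hu a).eq_orderOf, ← zpow_eq_zpow_iff_modEq,
      ← hm b _ (pow_pow_factorial_sub_one_of_le hab (hu a).pow_eq_one),
      ← hm a _ (hu a).pow_eq_one]
  refine ⟨⟨_, hx⟩, congrArg Additive.ofMul (MonoidHom.ext fun t => ?_)⟩
  have ht := pow_pow_factorial_orderOf_sub_one (hG t)
  rw [powMonoidHom_apply_of_pow_eq_one hG _ ht, hm _ t ht]
  exact pow_val_intCast ht _

end invLimitZMod

/-- The group of abstract characters of the multiplicative group of the algebraic closure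
of `F_p` (i.e. group homomorphisms `k^* → k^*` for `k = \bar F_p`) is isomorphic, as an
abelian group, to the inverse limit of `ℤ/(p^{n!} - 1)ℤ`. -/
theorem characters_iso_invLimit (p : ℕ) [Fact p.Prime] :
    Nonempty (Additive ((AlgebraicClosure (ZMod p))ˣ →* (AlgebraicClosure (ZMod p))ˣ)
      ≃+ invLimitZMod p) := by
  have hG : ∀ t : (AlgebraicClosure (ZMod p))ˣ, (orderOf t).Coprime p := fun t =>
    orderOf_coprime_of_charP p <|
      isOfFinOrder_of_isIntegral (Algebra.IsIntegral.isIntegral (R := ZMod p) _)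
  exact ⟨(AddEquiv.ofBijective (invLimitZMod.powAddHom hG)
    ⟨invLimitZMod.powAddHom_injective hG, invLimitZMod.powAddHom_surjective hG⟩).symm⟩
end
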